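/- arXiv:2204.04108 — 10 statements merged into one kernel-verified Lean document; each statement's English description precedes it below -/
import Mathlib

section
/- Let d ≥ 2 be an integer and k, l nonnegative integers. For every finite subset X of the complex unit sphere Ω(d), the sum Σ_{a,b ∈ X} g^d_{k,l}(a*b) is a real number and is nonnegative. -/
/-!
Write `c_r` for the coefficients of `g^d_{k,l}` and, for a unit vector `a ∈ ℂ^d`, let
`h_a = ∑_r c_r |z|^{2r} (∑ a_i z_i)^{k-r} (∑ conj(a_i) z̄_i)^{l-r}`, a polynomial in `z, z̄`.
The recurrence satisfied by the `c_r` makes `h_a` harmonic. For the Fischer inner product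
`⟨p, q⟩ = ∑_α α! conj(p_α) q_α` multiplication by a variable is adjoint to differentiation in it,
so multiplication by `|z|²` is adjoint to the Laplacian. Hence only the `r = 0` term of `h_b`
contributes to `⟨h_a, h_b⟩`, and evaluating it gives
`⟨h_a, h_b⟩ = (d+k+l-2)! ∑_r c_r (a*b)^{k-r} conj(a*b)^{l-r}`, while `g^d_{k,l}(a*b)` is the
same sum times a nonnegative constant. Therefore `∑_{a,b ∈ X} g^d_{k,l}(a*b)` is a nonnegative
multiple of `⟨P, P⟩ ≥ 0`, where `P = ∑_{a ∈ X} h_a`.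
-/

open Finset

/-- The Hermitian inner product `a*b = ∑ conj(a i) * b i` on `ℂ^d`. -/
noncomputable def hermInner {d : ℕ} (a b : Fin d → ℂ) : ℂ :=
  ∑ i, (starRingEnd ℂ) (a i) * b i

/-- The dimension `m^d_{k,l}` of the space `Harm_d(k,l)`. -/
def harmDim (d k l : ℕ) : ℕ :=
  (d + k - 1).choose (d - 1) * (d + l - 1).choose (d - 1) -
    (d + k - 2).choose (d - 1) * (d + l - 2).choose (d - 1)

/-- The Jacobi polynomial `g^d_{k,l}` as a function `ℂ → ℂ`. -/
noncomputable def gJacobi (d k l : ℕ) (x : ℂ) : ℂ :=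
  ((harmDim d k l : ℂ) * (Nat.factorial (d - 2)) * (Nat.factorial k) * (Nat.factorial l) /
      ((Nat.factorial (d + k - 2)) * (Nat.factorial (d + l - 2)))) *
    ∑ r ∈ Finset.range (min k l + 1),
      (-1 : ℂ) ^ r * ((Nat.factorial (d + k + l - r - 2) : ℂ) /
          ((Nat.factorial r : ℂ) * (Nat.factorial (k - r)) * (Nat.factorial (l - r)))) *
        x ^ (k - r) * ((starRingEnd ℂ) x) ^ (l - r)

open MvPolynomial ComplexConjugate
open scoped Nat ComplexOrder

section Fischer

variable {σ : Type*} [Fintype σ]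

def monomialWeight (α : σ →₀ ℕ) : ℕ := ∏ i, (α i)!

lemma monomialWeight_zero : monomialWeight (0 : σ →₀ ℕ) = 1 := by
  simp [monomialWeight]

lemma monomialWeight_add_single (α : σ →₀ ℕ) (i : σ) :
    monomialWeight (α + Finsupp.single i 1) = monomialWeight α * (α i + 1) := by
  classical
  rw [monomialWeight, monomialWeight, Fintype.prod_eq_mul_prod_compl i,
    Fintype.prod_eq_mul_prod_compl i]
  have hrest : ∀ j ∈ ({i}ᶜ : Finset σ), ((α + Finsupp.single i 1 : σ →₀ ℕ) j)! = (α j)! := by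
    intro j hj
    rw [Finsupp.add_apply, Finsupp.single_eq_of_ne (by simpa using hj), add_zero]
  rw [Finset.prod_congr rfl hrest, Finsupp.add_apply, Finsupp.single_eq_same,
    Nat.factorial_succ]
  ring

omit [Fintype σ] in
lemma sum_support_mul_coeff_of_subset (q : MvPolynomial σ ℂ) {s : Finset (σ →₀ ℕ)}
    (hs : q.support ⊆ s) (f : (σ →₀ ℕ) → ℂ) :
    ∑ α ∈ q.support, f α * coeff α q = ∑ α ∈ s, f α * coeff α q :=
  Finset.sum_subset hs fun α _ hα => by rw [notMem_support_iff.mp hα, mul_zero]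

noncomputable def fischer : MvPolynomial σ ℂ →ₗ⋆[ℂ] MvPolynomial σ ℂ →ₗ[ℂ] ℂ :=
  LinearMap.mk₂'ₛₗ (starRingEnd ℂ) (RingHom.id ℂ)
    (fun p q => ∑ α ∈ q.support, (monomialWeight α * conj (coeff α p)) * coeff α q)
    (fun p₁ p₂ q => by
      simp only [coeff_add, map_add, mul_add, add_mul, Finset.sum_add_distrib])
    (fun c p q => by
      simp only [coeff_smul, smul_eq_mul, map_mul, Finset.mul_sum]
      exact Finset.sum_congr rfl fun _ _ => by ring)
    (fun p q₁ q₂ => by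
      classical
      rw [sum_support_mul_coeff_of_subset _ support_add, sum_support_mul_coeff_of_subset q₁
        (Finset.subset_union_left (s₂ := q₂.support)),
        sum_support_mul_coeff_of_subset q₂ (Finset.subset_union_right (s₁ := q₁.support))]
      simp only [coeff_add, mul_add, Finset.sum_add_distrib])
    (fun c p q => by
      rw [sum_support_mul_coeff_of_subset _ support_smul]
      simp only [coeff_smul, smul_eq_mul, RingHom.id_apply, Finset.mul_sum]
      exact Finset.sum_congr rfl fun _ _ => by ring)

lemma fischer_apply_of_support_subset (p q : MvPolynomial σ ℂ) {s : Finset (σ →₀ ℕ)}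
    (hs : q.support ⊆ s) :
    fischer p q = ∑ α ∈ s, (monomialWeight α * conj (coeff α p)) * coeff α q :=
  sum_support_mul_coeff_of_subset q hs _

lemma fischer_monomial_right (p : MvPolynomial σ ℂ) (β : σ →₀ ℕ) (c : ℂ) :
    fischer p (monomial β c) = monomialWeight β * conj (coeff β p) * c := by
  classical
  rw [fischer_apply_of_support_subset p _ support_monomial_subset, Finset.sum_singleton,
    coeff_monomial, if_pos rfl]

lemma conj_fischer (p q : MvPolynomial σ ℂ) : conj (fischer p q) = fischer q p := by
  rw [fischer_apply_of_support_subset p q Finset.subset_union_right,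
    fischer_apply_of_support_subset q p (Finset.subset_union_left (s₂ := q.support)),
    map_sum]
  refine Finset.sum_congr rfl fun α _ => ?_
  simp only [map_mul, map_natCast, Complex.conj_conj]
  ring

lemma fischer_mul_X (i : σ) (p q : MvPolynomial σ ℂ) :
    fischer p (X i * q) = fischer (pderiv i p) q := by
  classical
  induction q using MvPolynomial.induction_on' with
  | add q₁ q₂ h₁ h₂ => rw [mul_add, map_add, map_add, h₁, h₂]
  | monomial β c =>
    rw [X, monomial_mul, one_mul, fischer_monomial_right, fischer_monomial_right,
      coeff_pderiv, add_comm (Finsupp.single i 1), monomialWeight_add_single]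
    simp only [map_mul, map_add, map_natCast, map_one]
    push_cast
    ring

lemma fischer_X_mul (i : σ) (p q : MvPolynomial σ ℂ) :
    fischer (X i * p) q = fischer p (pderiv i q) := by
  rw [← conj_fischer, fischer_mul_X, conj_fischer]

lemma fischer_C_mul_left (c : ℂ) (p q : MvPolynomial σ ℂ) :
    fischer (C c * p) q = conj c * fischer p q := by
  rw [C_mul', LinearMap.map_smulₛₗ, LinearMap.smul_apply, smul_eq_mul]

lemma fischer_C_mul_right (c : ℂ) (p q : MvPolynomial σ ℂ) :
    fischer p (C c * q) = c * fischer p q := by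
  rw [C_mul', map_smul, smul_eq_mul]

lemma fischer_self_nonneg (p : MvPolynomial σ ℂ) : 0 ≤ fischer p p :=
  Finset.sum_nonneg fun α _ => by
    rw [mul_assoc]
    exact mul_nonneg (Nat.cast_nonneg _) (star_mul_self_nonneg _)

lemma fischer_one_one : fischer (1 : MvPolynomial σ ℂ) 1 = 1 := by
  classical
  rw [← C_1, C_apply, fischer_monomial_right, coeff_monomial, if_pos rfl, monomialWeight_zero]
  simp

end Fischer

lemma natCast_mul_pow_pred_mul_self {R : Type*} [CommSemiring R] (m : ℕ) (x : R) :
    (m : R) * x ^ (m - 1) * x = m * x ^ m := by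
  cases m with
  | zero => simp
  | succ m => rw [Nat.add_sub_cancel, mul_assoc, ← pow_succ]

lemma natCast_mul_natCast_pred {R : Type*} [CommRing R] (m : ℕ) :
    (m : R) * (m - 1 : ℕ) = m * (m - 1) := by
  cases m with
  | zero => simp
  | succ m => push_cast; ring

section Bivariate

variable {d : ℕ}

/- Polynomials in `z` and `z̄` on `ℂ^d`, with `X (Sum.inl i)` standing for `z_i` and
`X (Sum.inr i)` for `z̄_i`; `laplacian d` is `∑ i, ∂²/∂z_i∂z̄_i`. -/

noncomputable def zLin (u : Fin d → ℂ) : MvPolynomial (Fin d ⊕ Fin d) ℂ :=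
  ∑ i, C (u i) * X (Sum.inl i)

noncomputable def zbarLin (v : Fin d → ℂ) : MvPolynomial (Fin d ⊕ Fin d) ℂ :=
  ∑ i, C (v i) * X (Sum.inr i)

noncomputable def zNormSq (d : ℕ) : MvPolynomial (Fin d ⊕ Fin d) ℂ :=
  ∑ i, X (Sum.inl i) * X (Sum.inr i)

noncomputable def laplacian (d : ℕ) : Module.End ℂ (MvPolynomial (Fin d ⊕ Fin d) ℂ) :=
  ∑ i, (pderiv (Sum.inr i)).toLinearMap ∘ₗ (pderiv (Sum.inl i)).toLinearMap

lemma laplacian_apply (p : MvPolynomial (Fin d ⊕ Fin d) ℂ) :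
    laplacian d p = ∑ i, pderiv (Sum.inr i) (pderiv (Sum.inl i) p) := by
  simp [laplacian]

@[simp] lemma pderiv_inl_zLin (u : Fin d → ℂ) (i : Fin d) :
    pderiv (Sum.inl i) (zLin u) = C (u i) := by
  classical simp [zLin, pderiv_X, Pi.single_apply]

@[simp] lemma pderiv_inr_zLin (u : Fin d → ℂ) (i : Fin d) :
    pderiv (Sum.inr i) (zLin u) = 0 := by
  classical simp [zLin, pderiv_X]

@[simp] lemma pderiv_inl_zbarLin (v : Fin d → ℂ) (i : Fin d) :
    pderiv (Sum.inl i) (zbarLin v) = 0 := by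
  classical simp [zbarLin, pderiv_X]

@[simp] lemma pderiv_inr_zbarLin (v : Fin d → ℂ) (i : Fin d) :
    pderiv (Sum.inr i) (zbarLin v) = C (v i) := by
  classical simp [zbarLin, pderiv_X, Pi.single_apply]

@[simp] lemma pderiv_inl_zNormSq (i : Fin d) :
    pderiv (Sum.inl i) (zNormSq d) = X (Sum.inr i) := by
  classical simp [zNormSq, pderiv_X, Pi.single_apply]

@[simp] lemma pderiv_inr_zNormSq (i : Fin d) :
    pderiv (Sum.inr i) (zNormSq d) = X (Sum.inl i) := by
  classical simp [zNormSq, pderiv_X, Pi.single_apply]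

lemma fischer_zNormSq_mul (p q : MvPolynomial (Fin d ⊕ Fin d) ℂ) :
    fischer (zNormSq d * p) q = fischer p (laplacian d q) := by
  simp only [zNormSq, Finset.sum_mul, map_sum, LinearMap.sum_apply,
    laplacian_apply, mul_assoc, fischer_X_mul]

lemma fischer_zNormSq_pow_mul (r : ℕ) (p q : MvPolynomial (Fin d ⊕ Fin d) ℂ) :
    fischer (zNormSq d ^ r * p) q = fischer p ((laplacian d ^ r) q) := by
  induction r generalizing q with
  | zero => simp
  | succ r ih =>
    rw [pow_succ', mul_assoc, fischer_zNormSq_mul, ih, pow_succ, Module.End.mul_apply]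

lemma fischer_mul_zNormSq (p q : MvPolynomial (Fin d ⊕ Fin d) ℂ) :
    fischer p (zNormSq d * q) = fischer (laplacian d p) q := by
  rw [← conj_fischer, fischer_zNormSq_mul, conj_fischer]

lemma fischer_zLin_mul (u : Fin d → ℂ) (p q : MvPolynomial (Fin d ⊕ Fin d) ℂ) :
    fischer (zLin u * p) q = ∑ i, conj (u i) * fischer p (pderiv (Sum.inl i) q) := by
  simp only [zLin, Finset.sum_mul, map_sum, LinearMap.sum_apply,
    C_mul', smul_mul_assoc, LinearMap.map_smulₛₗ, LinearMap.smul_apply, fischer_X_mul,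
    smul_eq_mul]

lemma fischer_zbarLin_mul (v : Fin d → ℂ) (p q : MvPolynomial (Fin d ⊕ Fin d) ℂ) :
    fischer (zbarLin v * p) q = ∑ i, conj (v i) * fischer p (pderiv (Sum.inr i) q) := by
  simp only [zbarLin, Finset.sum_mul, map_sum, LinearMap.sum_apply,
    C_mul', smul_mul_assoc, LinearMap.map_smulₛₗ, LinearMap.smul_apply, fischer_X_mul,
    smul_eq_mul]

lemma laplacian_zNormSq_pow_mul (u v : Fin d → ℂ) (r p q : ℕ) :
    laplacian d (zNormSq d ^ r * zLin u ^ p * zbarLin v ^ q) =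
      C ((r : ℂ) * (d + r - 1 + p + q)) * (zNormSq d ^ (r - 1) * zLin u ^ p * zbarLin v ^ q) +
        C ((p * q : ℂ) * ∑ i, u i * v i) *
          (zNormSq d ^ r * zLin u ^ (p - 1) * zbarLin v ^ (q - 1)) := by
  set T := zNormSq d
  set L := zLin u
  set M := zbarLin v
  set z : Fin d → MvPolynomial (Fin d ⊕ Fin d) ℂ := fun i => X (Sum.inl i)
  set zbar : Fin d → MvPolynomial (Fin d ⊕ Fin d) ℂ := fun i => X (Sum.inr i)
  set c : ℂ → MvPolynomial (Fin d ⊕ Fin d) ℂ := fun a => C a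
  have hderiv : ∀ i, pderiv (Sum.inr i) (pderiv (Sum.inl i) (T ^ r * L ^ p * M ^ q)) =
      ((r * (r - 1) : ℕ) * T ^ (r - 1 - 1) * L ^ p * M ^ q) * (z i * zbar i) +
        r * T ^ (r - 1) * L ^ p * M ^ q +
        (r * p * T ^ (r - 1) * L ^ (p - 1) * M ^ q) * (c (u i) * z i) +
        (r * q * T ^ (r - 1) * L ^ p * M ^ (q - 1)) * (c (v i) * zbar i) +
        (p * q * T ^ r * L ^ (p - 1) * M ^ (q - 1)) * c (u i * v i) := by
    intro i
    simp only [T, L, M, z, zbar, c, map_add, pderiv_mul, pderiv_pow, pderiv_inl_zNormSq,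
      pderiv_inr_zNormSq, pderiv_inl_zLin, pderiv_inr_zLin, pderiv_inl_zbarLin,
      pderiv_inr_zbarLin, pderiv_X_self, Derivation.map_natCast, pderiv_C, map_zero, map_mul]
    push_cast
    ring
  have hT : ∑ i, z i * zbar i = T := rfl
  have hL : ∑ i, c (u i) * z i = L := rfl
  have hM : ∑ i, c (v i) * zbar i = M := rfl
  have hs : ∑ i, c (u i * v i) = C (∑ i, u i * v i) := (map_sum C _ _).symm
  rw [laplacian_apply, Finset.sum_congr rfl fun i _ => hderiv i]
  simp only [Finset.sum_add_distrib, ← Finset.mul_sum, Finset.sum_const, Finset.card_univ,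
    Fintype.card_fin, nsmul_eq_mul, hT, hL, hM, hs]
  simp only [map_mul, map_add, map_sub, map_natCast, map_one]
  push_cast
  linear_combination (r * L ^ p * M ^ q) * natCast_mul_pow_pred_mul_self (r - 1) T +
    (r * T ^ (r - 1) * M ^ q) * natCast_mul_pow_pred_mul_self p L +
    (r * T ^ (r - 1) * L ^ p) * natCast_mul_pow_pred_mul_self q M +
    (T ^ (r - 1) * L ^ p * M ^ q) *
      natCast_mul_natCast_pred (R := MvPolynomial (Fin d ⊕ Fin d) ℂ) r

lemma laplacian_zLin_pow_mul (u v : Fin d → ℂ) (p q : ℕ) :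
    laplacian d (zLin u ^ p * zbarLin v ^ q) =
      C ((p * q : ℂ) * ∑ i, u i * v i) * (zLin u ^ (p - 1) * zbarLin v ^ (q - 1)) := by
  simpa using laplacian_zNormSq_pow_mul u v 0 p q

lemma laplacian_pow_zLin_pow_mul (u v : Fin d → ℂ) (r p q : ℕ) :
    (laplacian d ^ r) (zLin u ^ p * zbarLin v ^ q) =
      C ((p.descFactorial r * q.descFactorial r : ℂ) * (∑ i, u i * v i) ^ r) *
        (zLin u ^ (p - r) * zbarLin v ^ (q - r)) := by
  induction r with
  | zero => simp
  | succ r ih =>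
    rw [pow_succ', Module.End.mul_apply, ih, C_mul', map_smul, laplacian_zLin_pow_mul,
      ← C_mul', ← mul_assoc, ← map_mul, Nat.sub_sub, Nat.sub_sub, Nat.descFactorial_succ,
      Nat.descFactorial_succ]
    congr 2
    push_cast
    ring

lemma fischer_zLin_pow_mul_zbarLin_pow (u v w z : Fin d → ℂ) (p q : ℕ) :
    fischer (zLin u ^ p * zbarLin v ^ q) (zLin w ^ p * zbarLin z ^ q) =
      p ! * q ! * (∑ i, conj (u i) * w i) ^ p * (∑ i, conj (v i) * z i) ^ q := by
  induction p with
  | zero =>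
    induction q with
    | zero => simpa using fischer_one_one
    | succ q ih =>
      have hderiv : ∀ i, pderiv (Sum.inr i) (zLin w ^ 0 * zbarLin z ^ (q + 1)) =
          C (z i) * (C ((q + 1 : ℕ) : ℂ) * (zLin w ^ 0 * zbarLin z ^ q)) := by
        intro i
        simp only [pow_zero, one_mul, pderiv_pow, pderiv_inr_zbarLin, Nat.add_sub_cancel,
          map_natCast]
        push_cast
        ring
      rw [show zLin u ^ 0 * zbarLin v ^ (q + 1) = zbarLin v * (zLin u ^ 0 * zbarLin v ^ q) by
        ring, fischer_zbarLin_mul]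
      simp only [hderiv, fischer_C_mul_right, ih]
      simp only [← mul_assoc, ← Finset.sum_mul]
      push_cast [Nat.factorial_succ]
      ring
  | succ p ih =>
    have hderiv : ∀ i, pderiv (Sum.inl i) (zLin w ^ (p + 1) * zbarLin z ^ q) =
        C (w i) * (C ((p + 1 : ℕ) : ℂ) * (zLin w ^ p * zbarLin z ^ q)) := by
      intro i
      simp only [pderiv_mul, pderiv_pow, pderiv_inl_zLin, pderiv_inl_zbarLin, mul_zero,
        add_zero, Nat.add_sub_cancel, map_natCast]
      push_cast
      ring
    rw [pow_succ', mul_assoc, fischer_zLin_mul]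
    simp only [hderiv, fischer_C_mul_right, ih]
    simp only [← mul_assoc, ← Finset.sum_mul]
    push_cast [Nat.factorial_succ]
    ring

end Bivariate

section Jacobi

variable {d : ℕ}

noncomputable def jacobiCoeff (d k l r : ℕ) : ℂ :=
  (-1) ^ r * ((d + k + l - r - 2)! / ((r ! : ℂ) * (k - r)! * (l - r)!))

noncomputable def jacobiNorm (d k l : ℕ) : ℝ :=
  harmDim d k l * (d - 2)! * k ! * l ! / ((d + k - 2)! * (d + l - 2)!)

lemma gJacobi_eq (d k l : ℕ) (x : ℂ) :
    gJacobi d k l x = jacobiNorm d k l *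
      ∑ r ∈ Finset.range (min k l + 1), jacobiCoeff d k l r * x ^ (k - r) * conj x ^ (l - r) := by
  simp [gJacobi, jacobiNorm, jacobiCoeff]

lemma conj_jacobiCoeff (d k l r : ℕ) : conj (jacobiCoeff d k l r) = jacobiCoeff d k l r := by
  simp [jacobiCoeff, map_div₀]

lemma jacobiCoeff_zero_mul (d k l : ℕ) :
    jacobiCoeff d k l 0 * (k ! * l !) = (d + k + l - 2)! := by
  simp only [jacobiCoeff, pow_zero, one_mul, Nat.sub_zero, Nat.factorial_zero, Nat.cast_one]
  field_simp

lemma jacobiCoeff_recurrence (hd : 1 ≤ d) {k l r : ℕ} (hk : r + 1 ≤ k) (hl : r + 1 ≤ l) :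
    jacobiCoeff d k l (r + 1) *
        ((r + 1 : ℕ) * (d + (r + 1 : ℕ) - 1 + (k - (r + 1) : ℕ) + (l - (r + 1) : ℕ))) +
      jacobiCoeff d k l r * ((k - r : ℕ) * (l - r : ℕ)) = 0 := by
  obtain ⟨k, rfl⟩ := Nat.exists_eq_add_of_le hk
  obtain ⟨l, rfl⟩ := Nat.exists_eq_add_of_le hl
  obtain ⟨d, rfl⟩ := Nat.exists_eq_add_of_le hd
  have e₁ : 1 + d + (r + 1 + k) + (r + 1 + l) - (r + 1) - 2 = d + k + l + r := by omega
  have e₂ : 1 + d + (r + 1 + k) + (r + 1 + l) - r - 2 = d + k + l + r + 1 := by omega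
  simp only [jacobiCoeff, e₁, e₂, Nat.add_sub_cancel_left,
    show r + 1 + k - r = k + 1 by omega, show r + 1 + l - r = l + 1 by omega]
  field_simp
  push_cast [Nat.factorial_succ]
  ring

noncomputable def zonal (d k l : ℕ) (u v : Fin d → ℂ) : MvPolynomial (Fin d ⊕ Fin d) ℂ :=
  ∑ r ∈ Finset.range (min k l + 1),
    C (jacobiCoeff d k l r) * (zNormSq d ^ r * zLin u ^ (k - r) * zbarLin v ^ (l - r))

lemma laplacian_zonal (hd : 1 ≤ d) (k l : ℕ) {u v : Fin d → ℂ} (huv : ∑ i, u i * v i = 1) :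
    laplacian d (zonal d k l u v) = 0 := by
  set T := zNormSq d
  set L := zLin u
  set M := zbarLin v
  have hterm : ∀ r,
      laplacian d (C (jacobiCoeff d k l r) * (T ^ r * L ^ (k - r) * M ^ (l - r))) =
      C (jacobiCoeff d k l r * (r * (d + r - 1 + (k - r : ℕ) + (l - r : ℕ)))) *
          (T ^ (r - 1) * L ^ (k - r) * M ^ (l - r)) +
        C (jacobiCoeff d k l r * ((k - r : ℕ) * (l - r : ℕ))) *
          (T ^ r * L ^ (k - r - 1) * M ^ (l - r - 1)) := by
    intro r
    rw [C_mul', map_smul, laplacian_zNormSq_pow_mul, huv, mul_one]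
    simp only [smul_add, ← C_mul', map_mul]
    ring
  have hlast : (k - min k l) * (l - min k l) = 0 := by
    rcases le_total k l with h | h <;> simp [h]
  rw [zonal, map_sum, Finset.sum_congr rfl fun r _ => hterm r, Finset.sum_add_distrib,
    Finset.sum_range_succ', Finset.sum_range_succ, ← Nat.cast_mul, hlast]
  simp only [Nat.cast_zero, zero_mul, mul_zero, map_zero, add_zero, ← Finset.sum_add_distrib]
  refine Finset.sum_eq_zero fun r hr => ?_
  have hr : r < min k l := Finset.mem_range.mp hr
  rw [Nat.add_sub_cancel, Nat.sub_sub, Nat.sub_sub, ← add_mul, ← map_add, ← mul_assoc,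
    ← mul_assoc, jacobiCoeff_recurrence hd (by omega) (by omega)]
  simp

lemma zonal_eq_add_zNormSq_mul (d k l : ℕ) (u v : Fin d → ℂ) :
    zonal d k l u v = C (jacobiCoeff d k l 0) * (zLin u ^ k * zbarLin v ^ l) +
      zNormSq d * ∑ r ∈ Finset.range (min k l), C (jacobiCoeff d k l (r + 1)) *
        (zNormSq d ^ r * zLin u ^ (k - (r + 1)) * zbarLin v ^ (l - (r + 1))) := by
  rw [zonal, Finset.sum_range_succ', add_comm, Finset.mul_sum]
  simp only [pow_succ', pow_zero, one_mul, Nat.sub_zero]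
  congr 1
  exact Finset.sum_congr rfl fun r _ => by ring

lemma fischer_zonal (hd : 1 ≤ d) (k l : ℕ) {u v w z : Fin d → ℂ} (huv : ∑ i, u i * v i = 1)
    (hwz : ∑ i, w i * z i = 1) :
    fischer (zonal d k l u v) (zonal d k l w z) = (d + k + l - 2)! *
      ∑ r ∈ Finset.range (min k l + 1), jacobiCoeff d k l r *
        (∑ i, conj (u i) * w i) ^ (k - r) * (∑ i, conj (v i) * z i) ^ (l - r) := by
  -- the `|z|²`-multiples in the second factor pair to zero with the harmonic first factor
  rw [zonal_eq_add_zNormSq_mul d k l w z, map_add, fischer_mul_zNormSq,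
    laplacian_zonal hd k l huv, map_zero, LinearMap.zero_apply, add_zero, fischer_C_mul_right,
    zonal, map_sum, LinearMap.sum_apply, Finset.mul_sum, Finset.mul_sum]
  refine Finset.sum_congr rfl fun r hr => ?_
  have hr : r ≤ min k l := Nat.lt_succ_iff.mp (Finset.mem_range.mp hr)
  have hk : ((k - r)! * k.descFactorial r : ℂ) = k ! := by
    exact_mod_cast Nat.factorial_mul_descFactorial (hr.trans (min_le_left k l))
  have hl : ((l - r)! * l.descFactorial r : ℂ) = l ! := by
    exact_mod_cast Nat.factorial_mul_descFactorial (hr.trans (min_le_right k l))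
  rw [fischer_C_mul_left, mul_assoc, fischer_zNormSq_pow_mul, laplacian_pow_zLin_pow_mul, hwz,
    one_pow, mul_one, fischer_C_mul_right, fischer_zLin_pow_mul_zbarLin_pow, conj_jacobiCoeff,
    ← jacobiCoeff_zero_mul, ← hk, ← hl]
  ring

lemma gJacobi_hermInner_eq_fischer_zonal (hd : 1 ≤ d) (k l : ℕ) {a b : Fin d → ℂ}
    (ha : hermInner a a = 1) (hb : hermInner b b = 1) :
    gJacobi d k l (hermInner a b) = (jacobiNorm d k l / (d + k + l - 2)! : ℝ) *
      fischer (zonal d k l a (star a)) (zonal d k l b (star b)) := by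
  have hunit : ∀ c : Fin d → ℂ, hermInner c c = 1 → ∑ i, c i * star c i = 1 := fun c hc => by
    rw [← hc, hermInner]
    exact Finset.sum_congr rfl fun i _ => mul_comm _ _
  have hconj : ∑ i, conj (star a i) * star b i = conj (hermInner a b) := by
    simp [hermInner, mul_comm]
  have hinner : ∑ i, conj (a i) * b i = hermInner a b := rfl
  have hfact : ((d + k + l - 2)! : ℂ) ≠ 0 := by exact_mod_cast Nat.factorial_ne_zero _
  rw [fischer_zonal hd k l (hunit a ha) (hunit b hb), hinner, hconj, gJacobi_eq]
  push_cast
  field_simp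

end Jacobi

theorem jacobi_sum_nonneg (d k l : ℕ) (hd : 2 ≤ d) (X : Finset (Fin d → ℂ))
    (hX : ∀ z ∈ X, hermInner z z = 1) :
    (∑ a ∈ X, ∑ b ∈ X, gJacobi d k l (hermInner a b)).im = 0 ∧
      0 ≤ (∑ a ∈ X, ∑ b ∈ X, gJacobi d k l (hermInner a b)).re := by
  have hsum : ∑ a ∈ X, ∑ b ∈ X, gJacobi d k l (hermInner a b) =
      (jacobiNorm d k l / (d + k + l - 2)! : ℝ) *
        fischer (∑ a ∈ X, zonal d k l a (star a)) (∑ b ∈ X, zonal d k l b (star b)) := by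
    simp only [map_sum, LinearMap.sum_apply, Finset.mul_sum]
    rw [Finset.sum_comm]
    exact Finset.sum_congr rfl fun b hb => Finset.sum_congr rfl fun a ha =>
      gJacobi_hermInner_eq_fischer_zonal (by omega) k l (hX a ha) (hX b hb)
  have hnonneg : 0 ≤ ∑ a ∈ X, ∑ b ∈ X, gJacobi d k l (hermInner a b) := by
    rw [hsum]
    refine mul_nonneg (Complex.zero_le_real.mpr ?_) (fischer_self_nonneg _)
    unfold jacobiNorm
    positivity
  exact ⟨(Complex.nonneg_iff.mp hnonneg).2.symm, (Complex.nonneg_iff.mp hnonneg).1⟩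
end

section
/- Let d ≥ 1 and let X be a finite subset of the complex unit sphere Ω(d). Then the sum Σ_{x,y,z ∈ X} ((y*z) − conj(x*y)·(x*z))^3 is a real number and is nonnegative. -/
/-!
Put `P_x y = y - (x*y) x`, the projection of `y` onto the orthogonal complement of the unit
vector `x`. Then `(y*z) - conj(x*y)(x*z) = (P_x y)*(P_x z)`, and a cube of inner products is the
inner product of third tensor powers, so for each fixed `x` the double sum over `y, z` is
`‖∑_y (P_x y)^{⊗3}‖²`.
-/

open Finset

open scoped InnerProductSpace ComplexOrder

section InnerProductSpace

variable {𝕜 E : Type*} [RCLike 𝕜] [NormedAddCommGroup E] [InnerProductSpace 𝕜 E]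

lemma sum_sum_inner_nonneg {α : Type*} (S : Finset α) (v : α → E) :
    0 ≤ ∑ y ∈ S, ∑ z ∈ S, ⟪v y, v z⟫_𝕜 := by
  have gram : ∑ y ∈ S, ∑ z ∈ S, ⟪v y, v z⟫_𝕜 = ⟪∑ y ∈ S, v y, ∑ z ∈ S, v z⟫_𝕜 := by
    rw [sum_inner]
    simp_rw [inner_sum]
  rw [gram, inner_self_eq_norm_sq_to_K]
  exact_mod_cast sq_nonneg ‖∑ y ∈ S, v y‖

lemma inner_sub_inner_smul_sub_inner_smul {x : E} (hx : ⟪x, x⟫_𝕜 = 1) (y z : E) :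
    ⟪y - ⟪x, y⟫_𝕜 • x, z - ⟪x, z⟫_𝕜 • x⟫_𝕜 =
      ⟪y, z⟫_𝕜 - (starRingEnd 𝕜) ⟪x, y⟫_𝕜 * ⟪x, z⟫_𝕜 := by
  simp only [inner_sub_left, inner_sub_right, inner_smul_left, inner_smul_right, hx,
    inner_conj_symm]
  ring

end InnerProductSpace

section TensorPower

variable {𝕜 ι : Type*} [RCLike 𝕜] [Fintype ι]

noncomputable def tensorPow (n : ℕ) (u : EuclideanSpace 𝕜 ι) : EuclideanSpace 𝕜 (Fin n → ι) :=
  WithLp.toLp 2 fun p => ∏ k, u (p k)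

lemma inner_tensorPow (n : ℕ) (u v : EuclideanSpace 𝕜 ι) :
    ⟪tensorPow n u, tensorPow n v⟫_𝕜 = ⟪u, v⟫_𝕜 ^ n := by
  simp only [tensorPow, PiLp.inner_apply, RCLike.inner_apply]
  rw [← Fin.prod_const, prod_univ_sum]
  simp only [map_prod, prod_mul_distrib]
  rfl

lemma sum_sum_inner_pow_nonneg {α : Type*} (S : Finset α) (v : α → EuclideanSpace 𝕜 ι)
    (n : ℕ) : 0 ≤ ∑ y ∈ S, ∑ z ∈ S, ⟪v y, v z⟫_𝕜 ^ n := by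
  simpa only [inner_tensorPow] using sum_sum_inner_nonneg (𝕜 := 𝕜) S fun y => tensorPow n (v y)

end TensorPower

lemma hermInner_eq_inner {d : ℕ} (a b : Fin d → ℂ) :
    hermInner a b = ⟪WithLp.toLp 2 a, WithLp.toLp 2 b⟫_ℂ := by
  rw [EuclideanSpace.inner_toLp_toLp, dotProduct]
  exact sum_congr rfl fun i _ => mul_comm _ _

theorem three_point_cube_sum_nonneg_general (d : ℕ) (X : Finset (Fin d → ℂ))
    (hX : ∀ z ∈ X, hermInner z z = 1) :
    (∑ x ∈ X, ∑ y ∈ X, ∑ z ∈ X,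
        (hermInner y z - (starRingEnd ℂ) (hermInner x y) * hermInner x z) ^ 3).im = 0 ∧
      0 ≤ (∑ x ∈ X, ∑ y ∈ X, ∑ z ∈ X,
        (hermInner y z - (starRingEnd ℂ) (hermInner x y) * hermInner x z) ^ 3).re := by
  have hsum : 0 ≤ ∑ x ∈ X, ∑ y ∈ X, ∑ z ∈ X,
      (hermInner y z - (starRingEnd ℂ) (hermInner x y) * hermInner x z) ^ 3 := by
    refine sum_nonneg fun x hx => ?_
    let e : (Fin d → ℂ) → EuclideanSpace ℂ (Fin d) := WithLp.toLp 2
    have hx_unit : ⟪e x, e x⟫_ℂ = 1 := by rw [← hermInner_eq_inner]; exact hX x hx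
    simpa only [hermInner_eq_inner, inner_sub_inner_smul_sub_inner_smul hx_unit] using
      sum_sum_inner_pow_nonneg X (fun y => e y - ⟪e x, e y⟫_ℂ • e x) 3
  obtain ⟨hre, him⟩ := Complex.nonneg_iff.mp hsum
  exact ⟨him.symm, hre⟩

theorem three_point_cube_sum_nonneg (d : ℕ) (hd : 1 ≤ d) (X : Finset (Fin d → ℂ))
    (hX : ∀ z ∈ X, hermInner z z = 1) :
    (∑ x ∈ X, ∑ y ∈ X, ∑ z ∈ X,
        (hermInner y z - (starRingEnd ℂ) (hermInner x y) * hermInner x z) ^ 3).im = 0 ∧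
      0 ≤ (∑ x ∈ X, ∑ y ∈ X, ∑ z ∈ X,
        (hermInner y z - (starRingEnd ℂ) (hermInner x y) * hermInner x z) ^ 3).re :=
  three_point_cube_sum_nonneg_general d X hX
end

section
/- Let α₁ = −4/59, α₂ = 13/118 + (3√35/118)·i and α₃ = conj(α₂). There is no finite subset X of the complex unit sphere Ω(59) such that: (i) for all distinct x, y ∈ X, x*y ∈ {α₁, α₂, α₃}; and (ii) for every x ∈ X, the number of y ∈ X with x*y = α₁ is 590, the number with x*y = α₂ is 177, and the number with x*y = α₃ is 177. -/
/-!
The kernel `(x, y) ↦ (x*y)³` is positive semidefinite: expanding the cube, the double sum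
`∑_{x,y ∈ X} (x*y)³` is a sum of squared moduli `|∑_{x ∈ X} x_i x_j x_k|²`, so its real part is
nonnegative. For a code as in the statement, the row sum `∑_{y ∈ X} (x*y)³` is the same for
every `x`, namely `1 + 590 α₁³ + 177 α₂³ + 177 α₃³ = -4725/3481 < 0`, a contradiction.
-/

open Finset
open scoped Classical

lemma hermInner_pow_eq_sum {d : ℕ} (x y : Fin d → ℂ) (k : ℕ) :
    hermInner x y ^ k =
      ∑ t : Fin k → Fin d, starRingEnd ℂ (∏ j, x (t j)) * ∏ j, y (t j) := by
  simp only [hermInner, Fintype.sum_pow, map_prod, prod_mul_distrib]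

lemma sum_sum_hermInner_pow_eq_sum_normSq {d : ℕ} (X : Finset (Fin d → ℂ)) (k : ℕ) :
    ∑ x ∈ X, ∑ y ∈ X, hermInner x y ^ k =
      ∑ t : Fin k → Fin d, (Complex.normSq (∑ x ∈ X, ∏ j, x (t j)) : ℂ) := by
  simp only [hermInner_pow_eq_sum, Complex.normSq_eq_conj_mul_self, map_sum, sum_mul_sum]
  exact (sum_congr rfl fun _ _ => sum_comm).trans sum_comm

lemma re_sum_sum_hermInner_pow_nonneg {d : ℕ} (X : Finset (Fin d → ℂ)) (k : ℕ) :
    0 ≤ (∑ x ∈ X, ∑ y ∈ X, hermInner x y ^ k).re := by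
  rw [sum_sum_hermInner_pow_eq_sum_normSq, Complex.re_sum]
  exact sum_nonneg fun t _ => by simpa using Complex.normSq_nonneg _

lemma sum_hermInner_eq_add_sum_card_smul {d : ℕ} {X : Finset (Fin d → ℂ)} {x : Fin d → ℂ}
    {A : Finset ℂ} (hx : x ∈ X) (hxx : hermInner x x = 1) (hA1 : 1 ∉ A)
    (hA : ∀ y ∈ X, x ≠ y → hermInner x y ∈ A) {M : Type*} [AddCommMonoid M] (g : ℂ → M) :
    ∑ y ∈ X, g (hermInner x y) = g 1 + ∑ a ∈ A, #{y ∈ X | hermInner x y = a} • g a := by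
  have hmaps : ∀ y ∈ X, hermInner x y ∈ insert 1 A := fun y hy => by
    rcases eq_or_ne x y with rfl | hne
    · simp [hxx]
    · exact mem_insert_of_mem (hA y hy hne)
  have hfiber : {y ∈ X | hermInner x y = 1} = {x} := by
    ext y
    simp only [mem_filter, mem_singleton]
    refine ⟨fun ⟨hy, h1⟩ => ?_, by rintro rfl; exact ⟨hx, hxx⟩⟩
    by_contra hne
    exact hA1 (h1 ▸ hA y hy (Ne.symm hne))
  rw [← sum_fiberwise_of_maps_to' hmaps, sum_insert hA1, hfiber]
  simp only [sum_const, card_singleton, one_smul]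

local notation "α₁" => (-4 / 59 : ℂ)
local notation "α₂" => (13 / 118 : ℂ) + (3 * Real.sqrt 35 / 118 : ℝ) * Complex.I
local notation "α₃" => (13 / 118 : ℂ) - (3 * Real.sqrt 35 / 118 : ℝ) * Complex.I

lemma alphas_pairwise_distinct :
    (1 : ℂ) ∉ ({α₁, α₂, α₃} : Finset ℂ) ∧ α₁ ∉ ({α₂, α₃} : Finset ℂ) ∧ α₂ ≠ α₃ := by
  have hs : 0 < Real.sqrt 35 := by positivity
  simp only [mem_insert, mem_singleton, ne_eq, Complex.ext_iff]
  norm_num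
  linarith

lemma one_add_valencies_mul_alphas_pow_three :
    1 + (590 * α₁ ^ 3 + (177 * α₂ ^ 3 + 177 * α₃ ^ 3)) = (-4725 / 3481 : ℂ) := by
  have hs : ((Real.sqrt 35 : ℝ) : ℂ) ^ 2 = 35 := by
    rw [← Complex.ofReal_pow, Real.sq_sqrt (by norm_num : (0:ℝ) ≤ 35)]
    norm_num
  push_cast
  linear_combination
    (1053 / 13924 : ℂ) * Complex.I ^ 2 * hs + (36855 / 13924 : ℂ) * Complex.I_sq

theorem no_complex_three_code_945 :
    ¬ ∃ X : Finset (Fin 59 → ℂ), X.Nonempty ∧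
      (∀ z ∈ X, hermInner z z = 1) ∧
      (∀ x ∈ X, ∀ y ∈ X, x ≠ y →
        hermInner x y = (-4 / 59 : ℂ) ∨
        hermInner x y = (13 / 118 : ℂ) + (3 * Real.sqrt 35 / 118 : ℝ) * Complex.I ∨
        hermInner x y = (13 / 118 : ℂ) - (3 * Real.sqrt 35 / 118 : ℝ) * Complex.I) ∧
      (∀ x ∈ X,
        (X.filter fun y => hermInner x y = (-4 / 59 : ℂ)).card = 590 ∧
        (X.filter fun y =>
          hermInner x y = (13 / 118 : ℂ) + (3 * Real.sqrt 35 / 118 : ℝ) * Complex.I).card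
            = 177 ∧
        (X.filter fun y =>
          hermInner x y = (13 / 118 : ℂ) - (3 * Real.sqrt 35 / 118 : ℝ) * Complex.I).card
            = 177) := by
  rintro ⟨X, hne, hnorm, hrel, hdeg⟩
  obtain ⟨h1, h12, h23⟩ := alphas_pairwise_distinct
  have hrow : ∀ x ∈ X, ∑ y ∈ X, hermInner x y ^ 3 = -4725 / 3481 := fun x hx => by
    obtain ⟨c₁, c₂, c₃⟩ := hdeg x hx
    rw [sum_hermInner_eq_add_sum_card_smul hx (hnorm x hx) h1 (by simpa using hrel x hx)
        (· ^ 3),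
      sum_insert h12, sum_pair h23, c₁, c₂, c₃, ← one_add_valencies_mul_alphas_pow_three]
    simp only [one_pow, nsmul_eq_mul, Nat.cast_ofNat]
  have hnonneg := re_sum_sum_hermInner_pow_nonneg X 3
  rw [sum_congr rfl hrow, sum_const, nsmul_eq_mul] at hnonneg
  have hcard : (0 : ℝ) < #X := by exact_mod_cast hne.card_pos
  norm_num at hnonneg
  linarith
end

section
/- Let d ≥ 2 be an integer and 0 < α < 1 a real number. Let X be a finite subset of the unit sphere S^{d−1} in ℝ^d such that for all distinct x, y ∈ X, the inner product ⟨x, y⟩ lies in {α, −α, 0}. If (d+4)α² ≤ 6 and (d+2)α² < 3, then |X| ≤ d(d+2)·(1−α²)/(3−(d+2)α²). -/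
/-!
Delsarte's linear programming bound with the Gegenbauer polynomials of degrees 2 and 4. For
unit vectors in `ℝ^d` and `t = ⟨x, y⟩`, the kernels `d t² - 1` and
`(d + 2)(d + 4) t⁴ - 6 (d + 2) t² + 3` are positive semidefinite: the first by Cauchy–Schwarz for
the trace of `∑ x xᵀ`, the second because `(d + 2)(d + 4)` times it is the Gram kernel of the
traceless part of `x ⊗ x ⊗ x ⊗ x`. On `X` we have `t⁴ = α² t²` off the diagonal, so summing the
degree-4 kernel over `X × X` bounds `∑ t²` in terms of `|X|`; since `(d + 4) α² ≤ 6`, the degree-2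
bound `∑ t² ≥ |X|² / d` turns this into a quadratic inequality in `|X|`.
-/

open Finset

/-- The Euclidean inner product on `ℝ^d`. -/
def dotR {d : ℕ} (x y : Fin d → ℝ) : ℝ := ∑ i, x i * y i

local notation "δ" => (1 : Matrix _ _ ℝ)

section SymmTensor

variable {ι : Type*}

structure IsSymmTensor (T : ι → ι → ι → ι → ℝ) : Prop where
  swap₁₂ : ∀ i j k l, T j i k l = T i j k l
  swap₂₃ : ∀ i j k l, T i k j l = T i j k l
  swap₃₄ : ∀ i j k l, T i j l k = T i j k l

theorem IsSymmTensor.swap_pairs {T : ι → ι → ι → ι → ℝ} (hT : IsSymmTensor T) (i j k l : ι) :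
    T k l i j = T i j k l := by
  rw [← hT.swap₂₃, hT.swap₁₂, ← hT.swap₃₄, hT.swap₂₃]

theorem isSymmTensor_pow (x : ι → ℝ) : IsSymmTensor fun i j k l => x i * x j * x k * x l := by
  constructor <;> intros <;> ring

/-- `δ ⊗ Z + Z ⊗ δ`, summed over the three ways of pairing four indices. -/
def symDelta [DecidableEq ι] (Z : ι → ι → ℝ) (i j k l : ι) : ℝ :=
  (δ i j * Z k l + Z i j * δ k l) + (δ i k * Z j l + Z i k * δ j l) + (δ i l * Z j k + Z i l * δ j k)

end SymmTensor

section TensorInner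

variable {ι : Type*} [Fintype ι]

def tensorInner (T U : ι → ι → ι → ι → ℝ) : ℝ :=
  ∑ i, ∑ j, ∑ k, ∑ l, T i j k l * U i j k l

theorem tensorInner_comm (T U : ι → ι → ι → ι → ℝ) : tensorInner T U = tensorInner U T := by
  simp only [tensorInner, mul_comm]

theorem tensorInner_pow_pow (x y : ι → ℝ) :
    tensorInner (fun i j k l => x i * x j * x k * x l) (fun i j k l => y i * y j * y k * y l) =
      (x ⬝ᵥ y) ^ 4 := by
  simp only [tensorInner, dotProduct, pow_succ, pow_zero, one_mul, sum_mul, mul_sum]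
  exact sum_congr rfl fun i _ => sum_congr rfl fun j _ => sum_congr rfl fun k _ =>
    sum_congr rfl fun l _ => by ring

namespace IsSymmTensor

variable {T : ι → ι → ι → ι → ℝ}

theorem tensorInner_swap₂₃ (hT : IsSymmTensor T) (U : ι → ι → ι → ι → ℝ) :
    tensorInner T (fun i j k l => U i k j l) = tensorInner T U := by
  refine (sum_congr rfl fun i _ => sum_comm).trans ?_
  simp only [hT.swap₂₃]; rfl

theorem tensorInner_swap₃₄ (hT : IsSymmTensor T) (U : ι → ι → ι → ι → ℝ) :
    tensorInner T (fun i j k l => U i j l k) = tensorInner T U := by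
  refine (sum_congr rfl fun i _ => sum_congr rfl fun j _ => sum_comm).trans ?_
  simp only [hT.swap₃₄]; rfl

theorem tensorInner_swap_pairs (hT : IsSymmTensor T) (U : ι → ι → ι → ι → ℝ) :
    tensorInner T (fun i j k l => U k l i j) = tensorInner T U := by
  calc _ = ∑ i, ∑ k, ∑ l, ∑ j, T i j k l * U k l i j :=
        sum_congr rfl fun i _ => by rw [sum_comm]; exact sum_congr rfl fun k _ => sum_comm
    _ = ∑ k, ∑ l, ∑ i, ∑ j, T i j k l * U k l i j := by
        rw [sum_comm]; exact sum_congr rfl fun k _ => sum_comm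
    _ = _ := by simp only [hT.swap_pairs]; rfl

theorem tensorInner_pairings (hT : IsSymmTensor T) (U : ι → ι → ι → ι → ℝ) :
    tensorInner T (fun i j k l => U i j k l + U i k j l + U i l j k) = 3 * tensorInner T U := by
  have h₂₃ := hT.tensorInner_swap₂₃ U
  have h₂₄ := (hT.tensorInner_swap₃₄ fun i j k l => U i k j l).trans h₂₃
  simp only [tensorInner, mul_add, sum_add_distrib] at h₂₃ h₂₄ ⊢
  rw [h₂₃, h₂₄]
  ring

end IsSymmTensor

variable [DecidableEq ι]

theorem tensorInner_one_apply_mul (T : ι → ι → ι → ι → ℝ) (Z : ι → ι → ℝ) :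
    tensorInner T (fun i j k l => δ i j * Z k l) = ∑ k, ∑ l, (∑ i, T i i k l) * Z k l := by
  simp only [tensorInner, Matrix.one_apply, ite_mul, one_mul, zero_mul, mul_ite, mul_zero,
    sum_ite_irrel, sum_const_zero, sum_ite_eq, mem_univ, if_true, sum_mul]
  rw [sum_comm]
  exact sum_congr rfl fun _ _ => sum_comm

theorem IsSymmTensor.tensorInner_symDelta {T : ι → ι → ι → ι → ℝ} (hT : IsSymmTensor T)
    (Z : ι → ι → ℝ) :
    tensorInner T (symDelta Z) = 6 * ∑ k, ∑ l, (∑ i, T i i k l) * Z k l := by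
  calc tensorInner T (symDelta Z)
      = 3 * tensorInner T (fun i j k l => δ i j * Z k l + Z i j * δ k l) :=
        hT.tensorInner_pairings _
    _ = 3 * (tensorInner T (fun i j k l => δ i j * Z k l) +
          tensorInner T (fun i j k l => δ k l * Z i j)) := by
        simp only [tensorInner, mul_add, sum_add_distrib, mul_comm (Z _ _)]
    _ = _ := by
      rw [hT.tensorInner_swap_pairs fun i j k l => δ i j * Z k l, tensorInner_one_apply_mul]
      ring

theorem sum_symDelta_diag {Z : ι → ι → ℝ} (hZ : ∀ i j, Z j i = Z i j) (k l : ι) :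
    ∑ i, symDelta Z i i k l = (Fintype.card ι + 4) * Z k l + (∑ i, Z i i) * δ k l := by
  simp only [symDelta, Matrix.one_apply, sum_add_distrib, ite_mul, mul_ite, one_mul, mul_one,
    zero_mul, mul_zero, sum_ite_eq', sum_ite_irrel, sum_const_zero, mem_univ, if_true,
    sum_const, card_univ, nsmul_eq_mul, hZ l k]
  ring

end TensorInner

section HarmonicTensor

variable {ι : Type*} [Fintype ι] [DecidableEq ι]

/-- For `x ⬝ᵥ x = 1`, the traceless part of `x ⊗ x ⊗ x ⊗ x` scaled by `(n + 2)(n + 4)`, where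
`n = Fintype.card ι`. The `δ / 2` is there because `δ ⊗ δ` occurs twice in each pairing term of `symDelta`. -/
noncomputable def harmonicTensor (x : ι → ℝ) : ι → ι → ι → ι → ℝ := fun i j k l =>
  (Fintype.card ι + 2) * (Fintype.card ι + 4) * (x i * x j * x k * x l) +
    symDelta (fun i j => δ i j / 2 - (Fintype.card ι + 2) * (x i * x j)) i j k l

theorem isSymmTensor_harmonicTensor (x : ι → ℝ) : IsSymmTensor (harmonicTensor x) := by
  constructor <;> intros <;> simp only [harmonicTensor, symDelta, Matrix.isSymm_one.apply] <;> ring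

theorem tensorInner_harmonicTensor_right (T : ι → ι → ι → ι → ℝ) (x : ι → ℝ) :
    tensorInner T (harmonicTensor x) =
      (Fintype.card ι + 2) * (Fintype.card ι + 4) *
          tensorInner T (fun i j k l => x i * x j * x k * x l) +
        tensorInner T (symDelta fun i j => δ i j / 2 - (Fintype.card ι + 2) * (x i * x j)) := by
  simp only [tensorInner, harmonicTensor, mul_add, sum_add_distrib, mul_sum,
    mul_left_comm (T _ _ _ _)]

theorem sum_harmonicTensor_diag {x : ι → ℝ} (hx : x ⬝ᵥ x = 1) (k l : ι) :
    ∑ i, harmonicTensor x i i k l = 0 := by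
  rw [dotProduct] at hx
  simp only [harmonicTensor, sum_add_distrib]
  rw [sum_symDelta_diag fun i j => by rw [Matrix.isSymm_one.apply, mul_comm (x j)]]
  simp only [Matrix.one_apply_eq, sum_sub_distrib, ← mul_sum, ← sum_mul, sum_const, card_univ,
    nsmul_eq_mul, hx]
  ring

theorem tensorInner_pow_harmonicTensor (x : ι → ℝ) {y : ι → ℝ} (hy : y ⬝ᵥ y = 1) :
    tensorInner (fun i j k l => y i * y j * y k * y l) (harmonicTensor x) =
      (Fintype.card ι + 2) * (Fintype.card ι + 4) * (x ⬝ᵥ y) ^ 4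
        - 6 * (Fintype.card ι + 2) * (x ⬝ᵥ y) ^ 2 + 3 := by
  rw [dotProduct] at hy
  rw [tensorInner_harmonicTensor_right, tensorInner_pow_pow,
    (isSymmTensor_pow y).tensorInner_symDelta]
  simp only [← sum_mul, hy, one_mul]
  have hδy : ∑ k, ∑ l, y k * y l * δ k l = 1 := by
    simp [Matrix.one_apply, hy]
  have hxy : ∑ k, ∑ l, y k * y l * (x k * x l) = (x ⬝ᵥ y) ^ 2 := by
    rw [sq, dotProduct, Fintype.sum_mul_sum]
    exact sum_congr rfl fun k _ => sum_congr rfl fun l _ => by ring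
  simp only [mul_sub, sum_sub_distrib, mul_div_assoc', ← sum_div, hδy, mul_left_comm _ (_ + 2 : ℝ),
    ← mul_sum, hxy, dotProduct_comm y x]
  ring

theorem tensorInner_harmonicTensor {x y : ι → ℝ} (hx : x ⬝ᵥ x = 1) (hy : y ⬝ᵥ y = 1) :
    tensorInner (harmonicTensor x) (harmonicTensor y) =
      (Fintype.card ι + 2) * (Fintype.card ι + 4) *
        ((Fintype.card ι + 2) * (Fintype.card ι + 4) * (x ⬝ᵥ y) ^ 4
          - 6 * (Fintype.card ι + 2) * (x ⬝ᵥ y) ^ 2 + 3) := by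
  rw [tensorInner_harmonicTensor_right, (isSymmTensor_harmonicTensor x).tensorInner_symDelta,
    tensorInner_comm, tensorInner_pow_harmonicTensor x hy]
  simp only [sum_harmonicTensor_diag hx, zero_mul, sum_const_zero, mul_zero, add_zero]

end HarmonicTensor

theorem sum_sum_sum_mul_eq_sum_sq {α κ : Type*} [Fintype κ] (s : Finset α) (φ : α → κ → ℝ) :
    ∑ a ∈ s, ∑ b ∈ s, ∑ p, φ a p * φ b p = ∑ p, (∑ a ∈ s, φ a p) ^ 2 := by
  simp only [sq, sum_mul_sum]
  exact (sum_congr rfl fun a _ => sum_comm).trans sum_comm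

section Delsarte

variable {ι : Type*} [Fintype ι]

theorem sq_sum_dotProduct_self_le (s : Finset (ι → ℝ)) :
    (∑ x ∈ s, x ⬝ᵥ x) ^ 2 ≤ Fintype.card ι * ∑ x ∈ s, ∑ y ∈ s, (x ⬝ᵥ y) ^ 2 := by
  set M : ι → ι → ℝ := fun i j => ∑ x ∈ s, x i * x j
  have hgram : ∑ x ∈ s, ∑ y ∈ s, (x ⬝ᵥ y) ^ 2 = ∑ i, ∑ j, M i j ^ 2 := by
    rw [← Fintype.sum_prod_type (f := fun p : ι × ι => M p.1 p.2 ^ 2),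
      ← sum_sum_sum_mul_eq_sum_sq s fun x (p : ι × ι) => x p.1 * x p.2]
    simp only [dotProduct, sq, Fintype.sum_mul_sum, Fintype.sum_prod_type]
    exact sum_congr rfl fun x _ => sum_congr rfl fun y _ => sum_congr rfl fun i _ =>
      sum_congr rfl fun j _ => by ring
  have htrace : ∑ x ∈ s, x ⬝ᵥ x = ∑ i, M i i := by
    simp only [dotProduct, M]; exact sum_comm
  have hdiag : ∑ i, M i i ^ 2 ≤ ∑ i, ∑ j, M i j ^ 2 :=
    sum_le_sum fun i _ => single_le_sum (f := fun j => M i j ^ 2) (fun j _ => sq_nonneg _)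
      (mem_univ i)
  rw [hgram, htrace]
  calc (∑ i, M i i) ^ 2 ≤ Fintype.card ι * ∑ i, M i i ^ 2 := sq_sum_le_card_mul_sum_sq
    _ ≤ _ := by gcongr

theorem sum_sum_pow_four_sub_eq (s : Finset (ι → ℝ)) (α : ℝ) (hs : ∀ x ∈ s, x ⬝ᵥ x = 1)
    (hA : ∀ x ∈ s, ∀ y ∈ s, x ≠ y → x ⬝ᵥ y = α ∨ x ⬝ᵥ y = -α ∨ x ⬝ᵥ y = 0) :
    ∑ x ∈ s, ∑ y ∈ s, (x ⬝ᵥ y) ^ 4 - α ^ 2 * ∑ x ∈ s, ∑ y ∈ s, (x ⬝ᵥ y) ^ 2 =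
      #s * (1 - α ^ 2) := by
  have hrow : ∀ x ∈ s, ∑ y ∈ s, ((x ⬝ᵥ y) ^ 4 - α ^ 2 * (x ⬝ᵥ y) ^ 2) = 1 - α ^ 2 := by
    intro x hx
    rw [sum_eq_single_of_mem x hx, hs x hx]
    · ring
    · intro y hy hyx
      rcases hA x hx y hy (Ne.symm hyx) with h | h | h <;> rw [h] <;> ring
  simp only [mul_sum, ← sum_sub_distrib]
  rw [sum_congr rfl hrow, sum_const, nsmul_eq_mul]

theorem sum_sum_gegenbauer4_nonneg [DecidableEq ι] (s : Finset (ι → ℝ))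
    (hs : ∀ x ∈ s, x ⬝ᵥ x = 1) :
    0 ≤ ∑ x ∈ s, ∑ y ∈ s, ((Fintype.card ι + 2) * (Fintype.card ι + 4) * (x ⬝ᵥ y) ^ 4
      - 6 * (Fintype.card ι + 2) * (x ⬝ᵥ y) ^ 2 + 3) := by
  have hgram : ∑ x ∈ s, ∑ y ∈ s, tensorInner (harmonicTensor x) (harmonicTensor y) =
      ∑ p : ι × ι × ι × ι, (∑ x ∈ s, harmonicTensor x p.1 p.2.1 p.2.2.1 p.2.2.2) ^ 2 := by
    rw [← sum_sum_sum_mul_eq_sum_sq]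
    simp only [tensorInner, Fintype.sum_prod_type]
  have hpos : (0 : ℝ) < (Fintype.card ι + 2) * (Fintype.card ι + 4) := by positivity
  refine nonneg_of_mul_nonneg_right ?_ hpos
  calc 0 ≤ ∑ p : ι × ι × ι × ι, (∑ x ∈ s, harmonicTensor x p.1 p.2.1 p.2.2.1 p.2.2.2) ^ 2 :=
        sum_nonneg fun _ _ => sq_nonneg _
    _ = _ := by
      rw [← hgram, mul_sum]
      exact sum_congr rfl fun x hx => by
        rw [mul_sum]
        exact sum_congr rfl fun y hy => tensorInner_harmonicTensor (hs x hx) (hs y hy)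

end Delsarte

theorem le_div_of_moment_bounds {n d a S₂ S₄ : ℝ} (hd : 1 ≤ d) (hn : 0 ≤ n)
    (h₁ : (d + 4) * a ≤ 6) (h₂ : (d + 2) * a < 3)
    (hS₂ : n ^ 2 ≤ d * S₂) (hS₄ : 0 ≤ (d + 2) * (d + 4) * S₄ - 6 * (d + 2) * S₂ + 3 * n ^ 2)
    (hcount : S₄ - a * S₂ = n * (1 - a)) :
    n ≤ d * (d + 2) * (1 - a) / (3 - (d + 2) * a) := by
  have hden : 0 < 3 - (d + 2) * a := by linarith
  have ha : a < 1 := by nlinarith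
  -- `d` times the degree-4 bound plus `(d + 2)(6 - (d + 4) a) ≥ 0` times the degree-2 bound
  have key : (d + 4) * (n * (d * (d + 2) * (1 - a) - n * (3 - (d + 2) * a))) =
      d * ((d + 2) * (d + 4) * S₄ - 6 * (d + 2) * S₂ + 3 * n ^ 2) +
        (d + 2) * (6 - (d + 4) * a) * (d * S₂ - n ^ 2) := by
    linear_combination (-d * (d + 2) * (d + 4)) * hcount
  have hquad : 0 ≤ n * (d * (d + 2) * (1 - a) - n * (3 - (d + 2) * a)) := by
    refine nonneg_of_mul_nonneg_right (key ▸ ?_) (by linarith : (0 : ℝ) < d + 4)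
    have : 0 ≤ (d + 2) * (6 - (d + 4) * a) := mul_nonneg (by linarith) (by linarith)
    exact add_nonneg (mul_nonneg (by linarith) hS₄) (mul_nonneg this (by linarith))
  rw [le_div_iff₀ hden]
  rcases hn.eq_or_lt with rfl | hn
  · nlinarith
  · nlinarith [nonneg_of_mul_nonneg_right hquad hn]

theorem three_distance_bound_Hadamard1_general (d : ℕ) (hd : 2 ≤ d) (α : ℝ)
    (X : Finset (Fin d → ℝ))
    (hX : ∀ x ∈ X, dotR x x = 1)
    (hA : ∀ x ∈ X, ∀ y ∈ X, x ≠ y →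
      dotR x y = α ∨ dotR x y = -α ∨ dotR x y = 0)
    (h1 : ((d : ℝ) + 4) * α ^ 2 ≤ 6) (h2 : ((d : ℝ) + 2) * α ^ 2 < 3) :
    (X.card : ℝ) ≤ (d : ℝ) * ((d : ℝ) + 2) * (1 - α ^ 2) / (3 - ((d : ℝ) + 2) * α ^ 2) := by
  have hunit : ∀ x ∈ X, x ⬝ᵥ x = 1 := hX
  have hG₂ := sq_sum_dotProduct_self_le X
  have hG₄ := sum_sum_gegenbauer4_nonneg X hunit
  rw [sum_congr rfl hunit, sum_const, nsmul_one] at hG₂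
  simp only [Fintype.card_fin] at hG₂ hG₄
  refine le_div_of_moment_bounds (by exact_mod_cast (by omega : 1 ≤ d)) (Nat.cast_nonneg _) h1 h2
    hG₂ (S₄ := ∑ x ∈ X, ∑ y ∈ X, (x ⬝ᵥ y) ^ 4) ?_ (sum_sum_pow_four_sub_eq X α hunit hA)
  convert hG₄ using 1
  simp only [sum_add_distrib, sum_sub_distrib, ← mul_sum, sum_const, nsmul_eq_mul]
  ring

theorem three_distance_bound_Hadamard1 (d : ℕ) (hd : 2 ≤ d) (α : ℝ)
    (hα0 : 0 < α) (hα1 : α < 1) (X : Finset (Fin d → ℝ))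
    (hX : ∀ x ∈ X, dotR x x = 1)
    (hA : ∀ x ∈ X, ∀ y ∈ X, x ≠ y →
      dotR x y = α ∨ dotR x y = -α ∨ dotR x y = 0)
    (h1 : ((d : ℝ) + 4) * α ^ 2 ≤ 6) (h2 : ((d : ℝ) + 2) * α ^ 2 < 3) :
    (X.card : ℝ) ≤ (d : ℝ) * ((d : ℝ) + 2) * (1 - α ^ 2) / (3 - ((d : ℝ) + 2) * α ^ 2) :=
  three_distance_bound_Hadamard1_general d hd α X hX hA h1 h2
end

section
/- Let H₁, …, H_f be Hadamard matrices of order 16 such that for all i ≠ j, (1/8)·H_i H_jᵀ is a weighing matrix of order 16 and weight 4 (i.e., the H_i are mutually quasi-unbiased for parameters (16, 4, 64)). Then f ≤ 15. -/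
open Finset Matrix

/-- A Hadamard matrix of order `d`: entries `±1` with `H * Hᵀ = d • I`. -/
def IsHadamard {d : ℕ} (H : Matrix (Fin d) (Fin d) ℝ) : Prop :=
  (∀ r c, H r c = 1 ∨ H r c = -1) ∧ H * Hᵀ = (d : ℝ) • 1

/-- A weighing matrix of order `d` and weight `l`: entries in `{0, 1, -1}`
with `W * Wᵀ = l • I`. -/
def IsWeighing {d : ℕ} (l : ℕ) (W : Matrix (Fin d) (Fin d) ℝ) : Prop :=
  (∀ r c, W r c = 0 ∨ W r c = 1 ∨ W r c = -1) ∧ W * Wᵀ = (l : ℝ) • 1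

/-!
The rows of `H₁, …, H_f` are `16 f` vectors of `{±1}¹⁶` whose pairwise inner products are `0`
or `±8`, i.e. whose pairwise Hamming distances are `4`, `8` or `12`. Read as words of `𝔽₂¹⁶`,
together with their complements they form `32 f` distinct words all of whose distances are
divisible by `4`. Translated so as to contain `0`, such a code has all weights divisible by `4`,
hence is self-orthogonal for the dot product, so it spans a subspace of dimension at most `8`.
Thus `32 f ≤ 2⁸`, i.e. `f ≤ 8`.
-/

open Module

section SelfOrthogonal

variable {K V : Type*} [Field K] [AddCommGroup V] [Module K V]

theorem LinearMap.BilinForm.span_le_orthogonal_span (B : LinearMap.BilinForm K V) {s : Set V}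
    (hs : ∀ x ∈ s, ∀ y ∈ s, B x y = 0) :
    Submodule.span K s ≤ B.orthogonal (Submodule.span K s) := by
  refine Submodule.span_le.2 fun y hy => B.mem_orthogonal_iff.2 fun x hx => ?_
  exact (Submodule.span_le (p := LinearMap.ker (B.flip y)).2 (fun x hx => hs x hx y hy)) hx

theorem LinearMap.BilinForm.two_mul_finrank_le_of_le_orthogonal [FiniteDimensional K V]
    {B : LinearMap.BilinForm K V} (hB : LinearMap.ker B = ⊥) {W : Submodule K V}
    (hW : W ≤ B.orthogonal W) : 2 * finrank K W ≤ finrank K V := by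
  have hsum := finrank_add_finrank_orthogonal' (B := B) W
  rw [hB, inf_bot_eq, finrank_bot, add_zero] at hsum
  have := Submodule.finrank_mono hW
  omega

end SelfOrthogonal

theorem Matrix.ker_dotProductBilin {K ι : Type*} [Field K] [Fintype ι] :
    LinearMap.ker (dotProductBilin K K : (ι → K) →ₗ[K] (ι → K) →ₗ[K] K) = ⊥ :=
  LinearMap.ker_eq_bot'.2 fun v hv => dotProduct_eq_zero_iff.1 fun w => by
    simpa using LinearMap.congr_fun hv w

theorem card_le_pow_of_dotProduct_eq_zero {K ι : Type*} [Field K] [Finite K] [Fintype ι]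
    (s : Finset (ι → K)) (hs : ∀ x ∈ s, ∀ y ∈ s, x ⬝ᵥ y = 0) :
    #s ≤ Nat.card K ^ (Fintype.card ι / 2) := by
  set W := Submodule.span K (s : Set (ι → K))
  have hW : W ≤ LinearMap.BilinForm.orthogonal (dotProductBilin K K) W :=
    LinearMap.BilinForm.span_le_orthogonal_span _ (by simpa using hs)
  have hdim := LinearMap.BilinForm.two_mul_finrank_le_of_le_orthogonal ker_dotProductBilin hW
  rw [finrank_fintype_fun_eq_card] at hdim
  calc #s = Nat.card (s : Set (ι → K)) := (Nat.card_eq_finsetCard s).symm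
    _ ≤ Nat.card W := Nat.card_mono (Set.toFinite _) Submodule.subset_span
    _ = Nat.card K ^ finrank K W := natCard_eq_pow_finrank
    _ ≤ Nat.card K ^ (Fintype.card ι / 2) := Nat.pow_le_pow_right Nat.card_pos (by omega)

theorem hammingDist_add_left {ι β : Type*} [Fintype ι] [DecidableEq β] [Add β]
    [IsLeftCancelAdd β] (c a b : ι → β) : hammingDist (c + a) (c + b) = hammingDist a b :=
  hammingDist_comp (fun i => (c i + ·)) fun i => add_right_injective (c i)

section ZModTwo

variable {ι : Type*} [Fintype ι]

theorem hammingNorm_eq_sum_val (u : ι → ZMod 2) : hammingNorm u = ∑ i, (u i).val := by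
  have h : ∀ x : ZMod 2, (if x ≠ 0 then 1 else 0) = x.val := by decide
  rw [hammingNorm, card_filter]
  exact sum_congr rfl fun i _ => h (u i)

theorem hammingDist_eq_hammingNorm_add (u w : ι → ZMod 2) :
    hammingDist u w = hammingNorm (u + w) := by
  rw [hammingDist_eq_hammingNorm, ZModModule.neg_eq_self]

theorem hammingNorm_one_add_add_hammingNorm (u : ι → ZMod 2) :
    hammingNorm (1 + u) + hammingNorm u = Fintype.card ι := by
  have h : ∀ x : ZMod 2, (1 + x).val + x.val = 1 := by decide
  rw [hammingNorm_eq_sum_val, hammingNorm_eq_sum_val, ← sum_add_distrib, ← card_univ,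
    card_eq_sum_ones]
  exact sum_congr rfl fun i _ => h (u i)

theorem hammingDist_one_add_add_hammingDist (a b : ι → ZMod 2) :
    hammingDist (1 + a) b + hammingDist a b = Fintype.card ι := by
  rw [hammingDist_eq_hammingNorm_add, hammingDist_eq_hammingNorm_add, add_assoc]
  exact hammingNorm_one_add_add_hammingNorm (a + b)

theorem hammingNorm_add_add_two_mul_sum_val (u w : ι → ZMod 2) :
    hammingNorm (u + w) + 2 * ∑ i, (u i).val * (w i).val = hammingNorm u + hammingNorm w := by
  have h : ∀ x y : ZMod 2, (x + y).val + 2 * (x.val * y.val) = x.val + y.val := by decide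
  simp only [hammingNorm_eq_sum_val, mul_sum, ← sum_add_distrib]
  exact sum_congr rfl fun i _ => h (u i) (w i)

/-- Over `𝔽₂`, `u ⬝ᵥ w` is the parity of `|supp u ∩ supp w|`, and
`|supp (u + w)| = |supp u| + |supp w| - 2 |supp u ∩ supp w|`. -/
theorem dotProduct_eq_zero_of_four_dvd_hammingNorm {u w : ι → ZMod 2} (hu : 4 ∣ hammingNorm u)
    (hw : 4 ∣ hammingNorm w) (huw : 4 ∣ hammingNorm (u + w)) : u ⬝ᵥ w = 0 := by
  have key := hammingNorm_add_add_two_mul_sum_val u w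
  have hcast : u ⬝ᵥ w = ((∑ i, (u i).val * (w i).val : ℕ) : ZMod 2) := by simp [dotProduct]
  rw [hcast, ZMod.natCast_eq_zero_iff_even, Nat.even_iff]
  omega

/-- Translating by one word turns distances into weights, and over `𝔽₂` a code whose weights and
distances are all divisible by `4` is self-orthogonal. -/
theorem card_le_two_pow_of_four_dvd_hammingDist (s : Finset (ι → ZMod 2))
    (hs : ∀ a ∈ s, ∀ b ∈ s, 4 ∣ hammingDist a b) : #s ≤ 2 ^ (Fintype.card ι / 2) := by
  classical
  obtain rfl | ⟨c, hc⟩ := s.eq_empty_or_nonempty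
  · simp
  have hweight : ∀ a ∈ s, 4 ∣ hammingNorm (c + a) := fun a ha => by
    rw [← hammingDist_eq_hammingNorm_add]
    exact hs c hc a ha
  have horth : ∀ u ∈ s.image (c + ·), ∀ w ∈ s.image (c + ·), u ⬝ᵥ w = 0 := by
    simp only [forall_mem_image]
    intro a ha b hb
    refine dotProduct_eq_zero_of_four_dvd_hammingNorm (hweight a ha) (hweight b hb) ?_
    rw [← hammingDist_eq_hammingNorm_add, hammingDist_add_left]
    exact hs a ha b hb
  have := card_le_pow_of_dotProduct_eq_zero _ horth
  rwa [card_image_of_injective s (add_right_injective c), Nat.card_zmod] at this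

/-- Adjoining the complements `1 + a` keeps all distances divisible by `4` when `4 ∣ n`, and
doubles the code when no two words are complementary. -/
theorem two_mul_card_le_two_pow_of_four_dvd_hammingDist (hn : 4 ∣ Fintype.card ι)
    (s : Finset (ι → ZMod 2)) (hs : ∀ a ∈ s, ∀ b ∈ s, 4 ∣ hammingDist a b)
    (hne : ∀ a ∈ s, ∀ b ∈ s, hammingDist a b ≠ Fintype.card ι) :
    2 * #s ≤ 2 ^ (Fintype.card ι / 2) := by
  classical
  have hdisj : Disjoint s (s.image (1 + ·)) := by
    simp only [disjoint_right, forall_mem_image]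
    intro a ha h1a
    have := hammingDist_one_add_add_hammingDist a (1 + a)
    rw [hammingDist_self] at this
    exact hne a ha (1 + a) h1a (by omega)
  have hunion : ∀ u ∈ s ∪ s.image (1 + ·), ∀ w ∈ s ∪ s.image (1 + ·), 4 ∣ hammingDist u w := by
    simp only [mem_union, mem_image]
    rintro u (hu | ⟨a, ha, rfl⟩) w (hw | ⟨b, hb, rfl⟩)
    · exact hs u hu w hw
    · have := hammingDist_one_add_add_hammingDist b u
      rw [hammingDist_comm (1 + b), hammingDist_comm b] at this
      have := hs u hu b hb
      omega
    · have := hammingDist_one_add_add_hammingDist a w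
      have := hs a ha w hw
      omega
    · rw [hammingDist_add_left]
      exact hs a ha b hb
  have := card_le_two_pow_of_four_dvd_hammingDist _ hunion
  rwa [card_union_of_disjoint hdisj, card_image_of_injective s (add_right_injective 1),
    ← two_mul] at this

end ZModTwo

section SignVectors

variable {ι : Type*}

theorem dotProduct_eq_card_sub_two_mul_hammingDist [Fintype ι] {v w : ι → ℝ}
    (hv : ∀ i, v i = 1 ∨ v i = -1) (hw : ∀ i, w i = 1 ∨ w i = -1) :
    v ⬝ᵥ w = Fintype.card ι - 2 * hammingDist v w := by
  have h : ∀ i, v i * w i = 1 - 2 * if v i ≠ w i then 1 else 0 := fun i => by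
    rcases hv i with h | h <;> rcases hw i with h' | h' <;> norm_num [h, h']
  simp only [dotProduct, h, sum_sub_distrib, ← mul_sum, sum_boole]
  simp [hammingDist]

theorem exists_eq_neg_one_pow_val {v : ι → ℝ} (hv : ∀ i, v i = 1 ∨ v i = -1) :
    ∃ a : ι → ZMod 2, v = fun i => (-1) ^ (a i).val := by
  have h : ∀ i, ∃ e : ZMod 2, (-1 : ℝ) ^ e.val = v i := fun i =>
    (hv i).elim (fun h => ⟨0, by simp [h]⟩) (fun h => ⟨1, by simp [h, ZMod.val_one]⟩)
  choose a ha using h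
  exact ⟨a, funext fun i => (ha i).symm⟩

theorem neg_one_pow_val_injective : Function.Injective fun e : ZMod 2 => (-1 : ℝ) ^ e.val := by
  have h01 : ∀ z : ZMod 2, z = 0 ∨ z = 1 := by decide
  intro x y h
  rcases h01 x with rfl | rfl <;> rcases h01 y with rfl | rfl <;>
    first | rfl | norm_num [ZMod.val_one] at h

/-- Each `v x` is the image of a word of `𝔽₂ⁿ` under `0 ↦ 1, 1 ↦ -1`, which preserves Hamming
distances. -/
theorem two_mul_card_le_two_pow_of_pairwise_hammingDist {κ : Type*} [Fintype κ] [Fintype ι]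
    [Nonempty ι] (hn : 4 ∣ Fintype.card ι) {v : κ → ι → ℝ} (hv : ∀ x i, v x i = 1 ∨ v x i = -1)
    (hdist : Pairwise fun x y => 4 ∣ hammingDist (v x) (v y) ∧ hammingDist (v x) (v y) ≠ 0 ∧
      hammingDist (v x) (v y) ≠ Fintype.card ι) :
    2 * Fintype.card κ ≤ 2 ^ (Fintype.card ι / 2) := by
  classical
  choose b hb using fun x => exists_eq_neg_one_pow_val (hv x)
  have hbv : ∀ x y, hammingDist (b x) (b y) = hammingDist (v x) (v y) := fun x y => by
    rw [hb x, hb y]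
    exact (hammingDist_comp (fun _ => _) fun _ => neg_one_pow_val_injective).symm
  have hb_inj : Function.Injective b := fun x y hxy => by
    by_contra hne
    exact (hdist hne).2.1 (by rw [← hbv, hxy, hammingDist_self])
  have hs : ∀ x y, 4 ∣ hammingDist (b x) (b y) ∧ hammingDist (b x) (b y) ≠ Fintype.card ι :=
    fun x y => by
      rcases eq_or_ne x y with rfl | hxy
      · simpa using Fintype.card_ne_zero.symm
      · rw [hbv]
        exact ⟨(hdist hxy).1, (hdist hxy).2.2⟩
  have := two_mul_card_le_two_pow_of_four_dvd_hammingDist hn (univ.image b)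
    (by simpa [forall_mem_image] using fun x y => (hs x y).1)
    (by simpa [forall_mem_image] using fun x y => (hs x y).2)
  rwa [card_image_of_injective _ hb_inj, card_univ] at this

end SignVectors

theorem IsHadamard.dotProduct_row_eq_zero {d : ℕ} {H : Matrix (Fin d) (Fin d) ℝ}
    (hH : _root_.IsHadamard H) {r s : Fin d} (hrs : r ≠ s) : H r ⬝ᵥ H s = 0 := by
  have h : (H * Hᵀ) r s = 0 := by simp [hH.2, one_apply_ne hrs]
  exact h

theorem mul_dotProduct_row_of_isWeighing {ι : Type*} {d l : ℕ} {c : ℝ}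
    {H : ι → Matrix (Fin d) (Fin d) ℝ} (hHad : ∀ i, _root_.IsHadamard (H i))
    (hQU : ∀ i j, i ≠ j → IsWeighing l (c • (H i * (H j)ᵀ))) {x y : ι × Fin d} (hxy : x ≠ y) :
    c * (H x.1 x.2 ⬝ᵥ H y.1 y.2) = 0 ∨ c * (H x.1 x.2 ⬝ᵥ H y.1 y.2) = 1 ∨
      c * (H x.1 x.2 ⬝ᵥ H y.1 y.2) = -1 := by
  obtain ⟨i, r⟩ := x
  obtain ⟨j, s⟩ := y
  by_cases hij : i = j
  · subst hij
    left
    rw [(hHad i).dotProduct_row_eq_zero fun hrs => hxy (Prod.ext rfl hrs), mul_zero]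
  · exact (hQU i j hij).1 r s

theorem four_dvd_hammingDist_and_ne_of_inv_eight_mul_dotProduct {v w : Fin 16 → ℝ}
    (hv : ∀ i, v i = 1 ∨ v i = -1) (hw : ∀ i, w i = 1 ∨ w i = -1)
    (h : 1 / 8 * (v ⬝ᵥ w) = 0 ∨ 1 / 8 * (v ⬝ᵥ w) = 1 ∨ 1 / 8 * (v ⬝ᵥ w) = -1) :
    4 ∣ hammingDist v w ∧ hammingDist v w ≠ 0 ∧ hammingDist v w ≠ 16 := by
  have hdot := dotProduct_eq_card_sub_two_mul_hammingDist hv hw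
  rw [Fintype.card_fin, Nat.cast_ofNat] at hdot
  have : (hammingDist v w : ℝ) = 8 ∨ (hammingDist v w : ℝ) = 4 ∨ (hammingDist v w : ℝ) = 12 := by
    rcases h with h | h | h
    exacts [Or.inl (by linarith), Or.inr (Or.inl (by linarith)), Or.inr (Or.inr (by linarith))]
  have : hammingDist v w = 8 ∨ hammingDist v w = 4 ∨ hammingDist v w = 12 := by exact_mod_cast this
  omega

theorem quasi_unbiased_bound_12 (f : ℕ)
    (H : Fin f → Matrix (Fin 16) (Fin 16) ℝ)
    (hHad : ∀ i, _root_.IsHadamard (H i))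
    (hQU : ∀ i j, i ≠ j →
      IsWeighing 4 (((1 : ℝ) / 8) • (H i * (H j)ᵀ))) :
    f ≤ 15 := by
  have hv : ∀ (x : Fin f × Fin 16) i, H x.1 x.2 i = 1 ∨ H x.1 x.2 i = -1 :=
    fun x => (hHad x.1).1 x.2
  have hbound := two_mul_card_le_two_pow_of_pairwise_hammingDist (by norm_num) hv
    fun x y hxy => four_dvd_hammingDist_and_ne_of_inv_eight_mul_dotProduct (hv x) (hv y)
      (mul_dotProduct_row_of_isWeighing hHad hQU hxy)
  simp only [Fintype.card_prod, Fintype.card_fin] at hbound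
  omega
end

section
/- Let H₁, …, H_f be Hadamard matrices of order 24 such that for all i ≠ j, (1/12)·H_i H_jᵀ is a weighing matrix of order 24 and weight 4 (i.e., the H_i are mutually quasi-unbiased for parameters (24, 4, 144)). Then f ≤ 27. -/
open Finset Matrix

/-!
Delsarte's linear-programming argument with the degree-6 elementary symmetric function `e₆`.
Collect the `24 f` rows of all the `H i`. For every 6-set `S` of columns, the square of the sum
over all rows `x` of `∏_{c ∈ S} x c` is nonnegative; summing over `S` gives
`0 ≤ ∑_{x, y} e₆(x * y)`, where `x * y` is the entrywise product. For `±1` vectors of length 24,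
`e₆` depends only on the entry sum `t`: it is `C(24, 6) = 134596` for `t = 24` and
`-220 - 856 (t / 12) ^ 2` for `t ∈ {0, ±12}`. Orthogonality of the rows of a Hadamard matrix and the
weighing condition `∑_s W r s ^ 2 = 4` then evaluate the double sum as `f (3317760 - 208896 f)`,
which forces `f ≤ 15`.
-/

open Polynomial

theorem mul_eq_one_or_eq_neg_one {R : Type*} [Ring R] {a b : R} (ha : a = 1 ∨ a = -1)
    (hb : b = 1 ∨ b = -1) : a * b = 1 ∨ a * b = -1 := by
  rcases ha with rfl | rfl <;> rcases hb with rfl | rfl <;> simp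

theorem sum_sum_of_diag_offDiag {α R : Type*} [Fintype α] [DecidableEq α] [CommRing R]
    {B : α → α → R} {a b : R} (hdiag : ∀ i, B i i = a) (hoff : ∀ i j, i ≠ j → B i j = b) :
    ∑ i, ∑ j, B i j = Fintype.card α * (a + (Fintype.card α - 1) * b) := by
  have hB : ∀ i j, B i j = b + if i = j then a - b else 0 := by
    intro i j
    split_ifs with h
    · rw [h, hdiag]; ring
    · rw [hoff i j h, add_zero]
  simp_rw [hB, sum_add_distrib, sum_ite_eq, mem_univ, if_true, sum_const, card_univ, nsmul_eq_mul]
  ring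

theorem sum_sum_esymm_mul_nonneg {α β ι R : Type*} [Fintype α] [Fintype β] [Fintype ι]
    [CommRing R] [LinearOrder R] [IsOrderedRing R] (x : α → β → ι → R) (k : ℕ) :
    0 ≤ ∑ i, ∑ j, ∑ r, ∑ s, (univ.val.map (x i r * x j s)).esymm k := by
  calc 0 ≤ ∑ S ∈ univ.powersetCard k, (∑ i, ∑ r, ∏ c ∈ S, x i r c) ^ 2 :=
        sum_nonneg fun S _ => sq_nonneg _
    _ = _ := by
      simp_rw [esymm_map_val, Pi.mul_apply, prod_mul_distrib, sq, sum_mul_sum]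
      rw [sum_comm]
      refine sum_congr rfl fun i _ => ?_
      rw [sum_comm]
      refine sum_congr rfl fun r _ => ?_
      rw [sum_comm]
      refine sum_congr rfl fun j _ => sum_comm

section

variable {ι R : Type*} [Fintype ι] [CommRing R] [DecidableEq R] (w : ι → R)

theorem prod_X_add_C_of_sign (hw : ∀ c, w c = 1 ∨ w c = -1) :
    ∏ c, (X + C (w c)) = (X + 1 : R[X]) ^ #{c | w c = 1} * (X - 1) ^ #{c | w c ≠ 1} := by
  rw [← prod_filter_mul_prod_filter_not univ (fun c => w c = 1)]
  congr 1
  · rw [prod_congr rfl fun c hc => by rw [(mem_filter.1 hc).2, map_one], prod_const]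
  · rw [prod_congr rfl fun c hc => by rw [(hw c).resolve_left (mem_filter.1 hc).2, C_neg, map_one,
      ← sub_eq_add_neg], prod_const]

theorem esymm_eq_coeff_of_sign (hw : ∀ c, w c = 1 ∨ w c = -1) {k : ℕ}
    (hk : k ≤ Fintype.card ι) :
    (univ.val.map w).esymm k =
      ((X + 1 : R[X]) ^ #{c | w c = 1} * (X - 1) ^ #{c | w c ≠ 1}).coeff (Fintype.card ι - k) := by
  rw [← prod_X_add_C_of_sign w hw, Finset.prod, Multiset.prod_X_add_C_coeff' _ _ (by simp),
    card_val, card_univ, Nat.sub_sub_self hk]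

theorem sum_eq_card_sub_card_of_sign (hw : ∀ c, w c = 1 ∨ w c = -1) :
    ∑ c, w c = #{c | w c = 1} - #{c | w c ≠ 1} := by
  rw [← sum_filter_add_sum_filter_not univ (fun c => w c = 1),
    sum_congr rfl fun c hc => (mem_filter.1 hc).2,
    sum_congr rfl fun c hc => (hw c).resolve_left (mem_filter.1 hc).2]
  simp [sub_eq_add_neg]

end

theorem IsWeighing.sum_sq_row {d l : ℕ} {W : Matrix (Fin d) (Fin d) ℝ} (hW : IsWeighing l W)
    (r : Fin d) : ∑ s, W r s ^ 2 = l := by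
  simpa [mul_apply, sq] using congrFun (congrFun hW.2 r) r

theorem IsHadamard.sum_mul_row {d : ℕ} {H : Matrix (Fin d) (Fin d) ℝ} (hH : _root_.IsHadamard H)
    (r s : Fin d) : ∑ c, H r c * H s c = if r = s then (d : ℝ) else 0 := by
  simpa [mul_apply, one_apply] using congrFun (congrFun hH.2 r) s

theorem coeff_X_add_one_pow_mul_X_sub_one_pow_eighteen {a b : ℕ} (hab : a + b = 24) {m : ℝ}
    (hm : m = 0 ∨ m = 1 ∨ m = -1) (hdiff : (a : ℝ) - b = 12 * m) :
    ((X + 1 : ℝ[X]) ^ a * (X - 1) ^ b).coeff 18 = -220 - 856 * m ^ 2 := by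
  have hab' : (a : ℝ) + b = 24 := by exact_mod_cast hab
  have ha : (a : ℝ) = 12 + 6 * m := by linarith
  have hb : (b : ℝ) = 12 - 6 * m := by linarith
  rw [sub_eq_add_neg, ← C_1, ← C_neg, coeff_mul, Nat.sum_antidiagonal_eq_sum_range_succ_mk]
  simp only [coeff_X_add_C_pow]
  rcases hm with rfl | rfl | rfl <;> norm_num at ha hb <;> norm_cast at ha hb <;> subst ha hb <;>
    norm_num [Finset.sum_range_succ, Nat.choose]

theorem esymm_six_of_sign {w : Fin 24 → ℝ} (hw : ∀ c, w c = 1 ∨ w c = -1) {m : ℝ}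
    (hm : m = 0 ∨ m = 1 ∨ m = -1) (hsum : ∑ c, w c = 12 * m) :
    (univ.val.map w).esymm 6 = -220 - 856 * m ^ 2 := by
  rw [esymm_eq_coeff_of_sign w hw (by simp), Fintype.card_fin]
  refine coeff_X_add_one_pow_mul_X_sub_one_pow_eighteen ?_ hm ?_
  · rw [card_filter_add_card_filter_not, card_univ, Fintype.card_fin]
  · rw [← sum_eq_card_sub_card_of_sign w hw, hsum]

theorem IsHadamard.sum_sum_esymm_six_mul_rows {H : Matrix (Fin 24) (Fin 24) ℝ}
    (hH : _root_.IsHadamard H) :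
    ∑ r, ∑ s, (univ.val.map (H r * H s)).esymm 6 = 3108864 := by
  rw [sum_sum_of_diag_offDiag (a := 134596) (b := -220)]
  · norm_num
  · intro r
    have hsq : H r * H r = 1 := funext fun c => by rcases hH.1 r c with h | h <;> simp [h]
    rw [hsq, esymm_map_val]
    simp [Nat.choose]
  · intro r s hrs
    have h := esymm_six_of_sign (fun c => mul_eq_one_or_eq_neg_one (hH.1 r c) (hH.1 s c))
      (m := 0) (Or.inl rfl) (by simpa [hrs] using hH.sum_mul_row r s)
    simpa using h

theorem sum_sum_esymm_six_mul_rows_of_isWeighing {H K : Matrix (Fin 24) (Fin 24) ℝ}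
    (hH : ∀ r c, H r c = 1 ∨ H r c = -1) (hK : ∀ r c, K r c = 1 ∨ K r c = -1)
    (hW : IsWeighing 4 ((1 / 12 : ℝ) • (H * Kᵀ))) :
    ∑ r, ∑ s, (univ.val.map (H r * K s)).esymm 6 = -208896 := by
  set W := (1 / 12 : ℝ) • (H * Kᵀ)
  have hrow : ∀ r s, (univ.val.map (H r * K s)).esymm 6 = -220 - 856 * W r s ^ 2 := by
    intro r s
    refine esymm_six_of_sign (fun c => mul_eq_one_or_eq_neg_one (hH r c) (hK s c)) (hW.1 r s) ?_
    simp [W, mul_apply]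
  simp_rw [hrow, sum_sub_distrib, ← mul_sum, hW.sum_sq_row]
  norm_num

theorem quasi_unbiased_bound_13 (f : ℕ)
    (H : Fin f → Matrix (Fin 24) (Fin 24) ℝ)
    (hHad : ∀ i, _root_.IsHadamard (H i))
    (hQU : ∀ i j, i ≠ j →
      IsWeighing 4 (((1 : ℝ) / 12) • (H i * (H j)ᵀ))) :
    f ≤ 27 := by
  have hgram : 0 ≤ (f : ℝ) * (3108864 + (f - 1) * -208896) := by
    simpa only [sum_sum_of_diag_offDiag (fun i => (hHad i).sum_sum_esymm_six_mul_rows)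
      (fun i j hij => sum_sum_esymm_six_mul_rows_of_isWeighing (hHad i).1 (hHad j).1 (hQU i j hij)),
      Fintype.card_fin] using sum_sum_esymm_mul_nonneg H 6
  by_contra! hf
  have hf28 : (28 : ℝ) ≤ f := by exact_mod_cast hf
  nlinarith
end

section
/- Let H₁, …, H_f be Hadamard matrices of order 24 such that for all i ≠ j, (1/8)·H_i H_jᵀ is a weighing matrix of order 24 and weight 9 (i.e., the H_i are mutually quasi-unbiased for parameters (24, 9, 64)). Then f ≤ 208. -/
/-!
Send a `±1` vector `x` of length `n` to the vector of its odd monomials of degree at most `3`,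
`(∏ i ∈ S, x i)` for `#S ∈ {1, 3}`. By Newton's identities the inner product of the images of
`x` and `y` is `(t ^ 3 - (3n - 8) t) / 6` with `t = x ⬝ᵥ y`. For `n = 24` this polynomial
vanishes at `t ∈ {0, ±8}`, the inner products of distinct rows of a quasi-unbiased family of
Hadamard matrices, and not at `t = 24`. The images of the `24 f` rows are therefore pairwise
orthogonal and nonzero in a space of dimension `24 + C(24, 3) = 2048`, so `24 f ≤ 2048`.
-/

open Finset Matrix

open MvPolynomial

section Newton

variable {σ R : Type*} [Fintype σ] [CommRing R]

theorem two_mul_sum_powersetCard_two_prod (z : σ → R) :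
    2 * ∑ S ∈ univ.powersetCard 2, ∏ i ∈ S, z i = (∑ i, z i) ^ 2 - ∑ i, z i ^ 2 := by
  have h := congrArg (eval z) (mul_esymm_eq_sum σ R 2)
  simp [esymm, psum, powersetCard_one, Nat.sum_antidiagonal_eq_sum_range_succ_mk,
    sum_range_succ] at h
  linear_combination h

theorem three_mul_sum_powersetCard_three_prod (z : σ → R) :
    3 * ∑ S ∈ univ.powersetCard 3, ∏ i ∈ S, z i
      = (∑ S ∈ univ.powersetCard 2, ∏ i ∈ S, z i) * ∑ i, z i
        - (∑ i, z i) * ∑ i, z i ^ 2 + ∑ i, z i ^ 3 := by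
  have h := congrArg (eval z) (mul_esymm_eq_sum σ R 3)
  simp [esymm, psum, sum_filter, powersetCard_one, Nat.sum_antidiagonal_eq_sum_range_succ_mk,
    sum_range_succ] at h
  linear_combination h

theorem six_mul_sum_powersetCard_three_prod_of_sq_eq_one {z : σ → R} (hz : ∀ i, z i ^ 2 = 1) :
    6 * ∑ S ∈ univ.powersetCard 3, ∏ i ∈ S, z i
      = (∑ i, z i) ^ 3 - (3 * Fintype.card σ - 2) * ∑ i, z i := by
  have hz3 (i : σ) : z i ^ 3 = z i := by rw [pow_succ, hz, one_mul]
  have h2 := two_mul_sum_powersetCard_two_prod z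
  have h3 := three_mul_sum_powersetCard_three_prod z
  simp only [hz, hz3, sum_const, card_univ, nsmul_eq_mul, mul_one] at h2 h3
  linear_combination 2 * h3 + (∑ i, z i) * h2

end Newton

section OddCubicFeature

variable {σ R : Type*} [Fintype σ] [DecidableEq σ] [CommRing R]

variable (σ) in
def oddCubicSupports : Finset (Finset σ) :=
  univ.powersetCard 1 ∪ univ.powersetCard 3

theorem card_oddCubicSupports :
    #(oddCubicSupports σ) = Fintype.card σ + (Fintype.card σ).choose 3 := by
  rw [oddCubicSupports, card_union_of_disjoint (univ.pairwise_disjoint_powersetCard (by decide)),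
    card_powersetCard, card_powersetCard, card_univ, Nat.choose_one_right]

def oddCubicFeature (x : σ → R) : oddCubicSupports σ → R :=
  fun S => ∏ i ∈ S.1, x i

theorem six_mul_oddCubicFeature_dotProduct {x y : σ → R} (hx : ∀ i, x i ^ 2 = 1)
    (hy : ∀ i, y i ^ 2 = 1) :
    6 * (oddCubicFeature x ⬝ᵥ oddCubicFeature y)
      = (x ⬝ᵥ y) ^ 3 - (3 * Fintype.card σ - 8) * (x ⬝ᵥ y) := by
  set z : σ → R := fun i => x i * y i
  have hz (i : σ) : z i ^ 2 = 1 := by simp only [z, mul_pow, hx, hy, one_mul]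
  have hfeature : oddCubicFeature x ⬝ᵥ oddCubicFeature y
      = ∑ i, z i + ∑ S ∈ univ.powersetCard 3, ∏ i ∈ S, z i := by
    change ∑ S : oddCubicSupports σ, (∏ i ∈ S.1, x i) * ∏ i ∈ S.1, y i = _
    rw [sum_coe_sort (oddCubicSupports σ) fun S => (∏ i ∈ S, x i) * ∏ i ∈ S, y i,
      oddCubicSupports, sum_union (univ.pairwise_disjoint_powersetCard (by decide))]
    simp [z, prod_mul_distrib, powersetCard_one]
  rw [hfeature, show x ⬝ᵥ y = ∑ i, z i from rfl]
  linear_combination six_mul_sum_powersetCard_three_prod_of_sq_eq_one hz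

end OddCubicFeature

theorem card_le_card_of_pairwise_dotProduct_eq_zero {ι κ K : Type*} [Fintype ι] [Fintype κ]
    [Field K] (v : ι → κ → K) (horth : Pairwise fun p q => v p ⬝ᵥ v q = 0)
    (hne : ∀ p, v p ⬝ᵥ v p ≠ 0) : Fintype.card ι ≤ Fintype.card κ := by
  classical
  have hgram : of v * (of v)ᵀ = diagonal fun p => v p ⬝ᵥ v p := by
    ext p q
    rcases eq_or_ne p q with rfl | hpq
    · rw [mul_apply', diagonal_apply_eq]
      rfl
    · rw [mul_apply', diagonal_apply_ne _ hpq]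
      exact horth hpq
  calc Fintype.card ι = (of v * (of v)ᵀ).rank := by simp [hgram, rank_diagonal, hne]
    _ ≤ (of v).rank := rank_mul_le_left _ _
    _ ≤ Fintype.card κ := rank_le_card_width _

theorem IsHadamard.sq_apply {d : ℕ} {H : Matrix (Fin d) (Fin d) ℝ} (hH : _root_.IsHadamard H)
    (r c : Fin d) : H r c ^ 2 = 1 := by
  rcases hH.1 r c with h | h <;> rw [h] <;> norm_num

theorem IsHadamard.dotProduct_row {d : ℕ} {H : Matrix (Fin d) (Fin d) ℝ}
    (hH : _root_.IsHadamard H) (r s : Fin d) : H r ⬝ᵥ H s = if r = s then (d : ℝ) else 0 := by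
  simpa [mul_apply', one_apply] using congrFun (congrFun hH.2 r) s

theorem IsWeighing.pow_three_apply {d l : ℕ} {W : Matrix (Fin d) (Fin d) ℝ}
    (hW : IsWeighing l W) (r c : Fin d) : W r c ^ 3 = W r c := by
  rcases hW.1 r c with h | h | h <;> rw [h] <;> norm_num

theorem quasi_unbiased_bound_14 (f : ℕ)
    (H : Fin f → Matrix (Fin 24) (Fin 24) ℝ)
    (hHad : ∀ i, _root_.IsHadamard (H i))
    (hQU : ∀ i j, i ≠ j →
      IsWeighing 9 (((1 : ℝ) / 8) • (H i * (H j)ᵀ))) :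
    f ≤ 208 := by
  set t : Fin f × Fin 24 → Fin f × Fin 24 → ℝ := fun p q => H p.1 p.2 ⬝ᵥ H q.1 q.2
  have ht_self (p) : t p p = 24 := by simp [t, (hHad p.1).dotProduct_row]
  have ht_ne {p q} (hpq : p ≠ q) : t p q ^ 3 = 64 * t p q := by
    obtain ⟨i, r⟩ := p
    obtain ⟨j, s⟩ := q
    rcases eq_or_ne i j with rfl | hij
    · have hrs : r ≠ s := fun h => hpq (h ▸ rfl)
      simp [t, (hHad i).dotProduct_row, hrs]
    · have h := (hQU i j hij).pow_three_apply r s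
      simp only [Matrix.smul_apply, mul_apply', transpose_apply, smul_eq_mul] at h
      linear_combination 512 * h
  have hfeature (p q) : 6 * (oddCubicFeature (H p.1 p.2) ⬝ᵥ oddCubicFeature (H q.1 q.2))
      = t p q ^ 3 - 64 * t p q := by
    rw [six_mul_oddCubicFeature_dotProduct ((hHad p.1).sq_apply p.2) ((hHad q.1).sq_apply q.2)]
    norm_num [t]
  have hcard := card_le_card_of_pairwise_dotProduct_eq_zero
    (fun p : Fin f × Fin 24 => oddCubicFeature (H p.1 p.2))
    (fun p q hpq => by linear_combination hfeature p q / 6 + ht_ne hpq / 6)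
    (fun p h => by
      have h24 := hfeature p p
      rw [h, ht_self] at h24
      norm_num at h24)
  simp only [Fintype.card_prod, Fintype.card_fin, Fintype.card_coe, card_oddCubicSupports] at hcard
  norm_num [Nat.choose] at hcard
  omega
end

section
/- Let H₁, …, H_f be Hadamard matrices of order 40 such that for all i ≠ j, (1/8)·H_i H_jᵀ is a weighing matrix of order 40 and weight 25 (i.e., the H_i are mutually quasi-unbiased for parameters (40, 25, 64)). Then f ≤ 30. -/
/-!
Each Hadamard matrix `H` gives the fourth-moment tensor `M_H = ∑ₖ hₖ ⊗ hₖ ⊗ hₖ ⊗ hₖ` of its rows,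
and `⟪M_A, M_B⟫ = ∑ₖₗ (A Bᵀ)ₖₗ⁴`, which is `40⁵` for `A = B` and `40 · 25 · 8⁴` for a
quasi-unbiased pair. All `M_H` have the same inner product with the pairing tensor
`S = δ_ab δ_ce + δ_ac δ_be + δ_ae δ_bc`; projected away from `S`, distinct tensors have negative
inner products, so `0 ≤ ‖∑ᵢ proj M_{Hᵢ}‖²` bounds their number by `30`.
-/

open Finset Matrix

open scoped RealInnerProductSpace

section Gram

variable {E ι : Type*} [NormedAddCommGroup E] [InnerProductSpace ℝ E] [Fintype ι] [Nonempty ι]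

theorem zero_le_add_card_sub_one_mul_of_inner_le (u : ι → E) {α β : ℝ}
    (hdiag : ∀ i, ⟪u i, u i⟫ ≤ α) (hoff : ∀ i j, i ≠ j → ⟪u i, u j⟫ ≤ β) :
    0 ≤ α + (Fintype.card ι - 1) * β := by
  classical
  have hrow : ∀ i, ∑ j, ⟪u i, u j⟫ ≤ α + (Fintype.card ι - 1) * β := by
    intro i
    rw [← add_sum_erase _ _ (mem_univ i)]
    have hcard : ((univ.erase i).card : ℝ) = Fintype.card ι - 1 := by
      rw [card_erase_of_mem (mem_univ i), card_univ, Nat.cast_sub Fintype.card_pos, Nat.cast_one]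
    refine add_le_add (hdiag i) ?_
    rw [← hcard, ← nsmul_eq_mul]
    exact sum_le_card_nsmul _ _ _ fun j hj => hoff i j (ne_of_mem_erase hj).symm
  have hcard : (0 : ℝ) < Fintype.card ι := by exact_mod_cast Fintype.card_pos
  refine nonneg_of_mul_nonneg_right ?_ hcard
  calc 0 ≤ ⟪∑ i, u i, ∑ j, u j⟫ := real_inner_self_nonneg
    _ = ∑ i, ∑ j, ⟪u i, u j⟫ := by rw [sum_inner]; simp only [inner_sum]
    _ ≤ ∑ _i : ι, (α + (Fintype.card ι - 1) * β) := sum_le_sum fun i _ => hrow i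
    _ = Fintype.card ι * (α + (Fintype.card ι - 1) * β) := by
      rw [sum_const, card_univ, nsmul_eq_mul]

theorem zero_le_add_card_sub_one_mul_of_inner_le_of_inner_eq (v : ι → E) (s : E)
    {p q D c : ℝ} (hq : 0 < q) (hs : ⟪s, s⟫ = q) (hvs : ∀ i, ⟪v i, s⟫ = p)
    (hdiag : ∀ i, ⟪v i, v i⟫ ≤ D) (hoff : ∀ i j, i ≠ j → ⟪v i, v j⟫ ≤ c) :
    0 ≤ (q * D - p ^ 2) + (Fintype.card ι - 1) * (q * c - p ^ 2) := by
  have hsv : ∀ i, ⟪s, v i⟫ = p := fun i => real_inner_comm (v i) s ▸ hvs i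
  have hproj : ∀ i j,
      ⟪q • v i - p • s, q • v j - p • s⟫ = q * (q * ⟪v i, v j⟫ - p ^ 2) := by
    intro i j
    simp only [inner_sub_left, inner_sub_right, real_inner_smul_left, real_inner_smul_right, hs,
      hvs, hsv]
    ring
  have := zero_le_add_card_sub_one_mul_of_inner_le (fun i => q • v i - p • s)
    (α := q * (q * D - p ^ 2)) (β := q * (q * c - p ^ 2))
    (fun i => by rw [hproj]; gcongr; exact hdiag i)
    (fun i j hij => by rw [hproj]; gcongr; exact hoff i j hij)
  refine nonneg_of_mul_nonneg_right ?_ hq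
  linarith

end Gram

section Moments

variable {m m' n R : Type*} [Fintype m] [Fintype m'] [Fintype n] [CommSemiring R]

def fourthMoment (A : Matrix m n R) : n × n × n × n → R
  | (a, b, c, e) => ∑ k, A k a * A k b * A k c * A k e

theorem sum_pow_four (g : n → R) :
    (∑ a, g a) ^ 4 = ∑ x : n × n × n × n, g x.1 * g x.2.1 * g x.2.2.1 * g x.2.2.2 := by
  simp only [Fintype.sum_prod_type, ← mul_sum, ← sum_mul]
  ring

theorem fourthMoment_dotProduct (A : Matrix m n R) (B : Matrix m' n R) :
    fourthMoment A ⬝ᵥ fourthMoment B = ∑ k, ∑ l, (A * Bᵀ) k l ^ 4 := by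
  have hx : ∀ x, fourthMoment A x * fourthMoment B x = ∑ k, ∑ l,
      A k x.1 * B l x.1 * (A k x.2.1 * B l x.2.1) * (A k x.2.2.1 * B l x.2.2.1) *
        (A k x.2.2.2 * B l x.2.2.2) := by
    rintro ⟨a, b, c, e⟩
    simp only [fourthMoment, sum_mul_sum]
    exact sum_congr rfl fun k _ => sum_congr rfl fun l _ => by ring
  simp only [dotProduct, hx, mul_apply, transpose_apply, sum_pow_four]
  rw [sum_comm]
  exact sum_congr rfl fun k _ => sum_comm

theorem fourthMoment_dotProduct_self_of_mul_transpose_eq_smul_one [DecidableEq m]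
    {A : Matrix m n R} {r : R} (h : A * Aᵀ = r • 1) :
    fourthMoment A ⬝ᵥ fourthMoment A = Fintype.card m * r ^ 4 := by
  rw [fourthMoment_dotProduct, h]
  simp [one_apply]

variable [DecidableEq n]

def pairingTensor : n × n × n × n → R
  | (a, b, c, e) => (if a = b ∧ c = e then 1 else 0) + (if a = c ∧ b = e then 1 else 0)
      + (if a = e ∧ b = c then 1 else 0)

theorem dotProduct_pairingTensor (T : n × n × n × n → R) :
    T ⬝ᵥ pairingTensor = ∑ a, ∑ c, T (a, a, c, c) + ∑ a, ∑ b, T (a, b, a, b)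
      + ∑ a, ∑ b, T (a, b, b, a) := by
  simp only [dotProduct, pairingTensor, Fintype.sum_prod_type, mul_add, sum_add_distrib, ite_and,
    mul_ite, mul_one, mul_zero]
  simp [sum_ite_eq]

theorem pairingTensor_dotProduct_self :
    (pairingTensor : n × n × n × n → R) ⬝ᵥ pairingTensor =
      3 * Fintype.card n ^ 2 + 6 * Fintype.card n := by
  have hsymm : ∀ a b : n, (a = b ∧ b = a) ↔ a = b := fun a b => ⟨And.left, fun h => ⟨h, h.symm⟩⟩
  rw [dotProduct_pairingTensor]
  simp [pairingTensor, sum_add_distrib, hsymm]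
  ring

theorem fourthMoment_dotProduct_pairingTensor (A : Matrix m n R) :
    fourthMoment A ⬝ᵥ pairingTensor = 3 * ∑ k, (A * Aᵀ) k k ^ 2 := by
  have hsq : ∑ k, (A * Aᵀ) k k ^ 2 = ∑ a, ∑ b, ∑ k, A k a * A k a * A k b * A k b := by
    simp only [mul_apply, transpose_apply, sq, sum_mul_sum, ← mul_assoc]
    rw [sum_comm]
    exact sum_congr rfl fun a _ => sum_comm
  rw [dotProduct_pairingTensor, hsq]
  simp only [fourthMoment]
  ring_nf

theorem fourthMoment_dotProduct_pairingTensor_of_mul_transpose_eq_smul_one [DecidableEq m]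
    {A : Matrix m n R} {r : R} (h : A * Aᵀ = r • 1) :
    fourthMoment A ⬝ᵥ pairingTensor = 3 * Fintype.card m * r ^ 2 := by
  rw [fourthMoment_dotProduct_pairingTensor, h]
  simp [mul_assoc]

end Moments

theorem IsWeighing.sum_sum_pow_four {d l : ℕ} {W : Matrix (Fin d) (Fin d) ℝ}
    (hW : IsWeighing l W) : ∑ k, ∑ j, W k j ^ 4 = d * l := by
  have hpow : ∀ k j, W k j ^ 4 = W k j * W k j := by
    intro k j
    rcases hW.1 k j with h | h | h <;> rw [h] <;> norm_num
  have hrow : ∀ k, ∑ j, W k j * W k j = l := fun k => by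
    simpa [mul_apply, one_apply] using congrFun (congrFun hW.2 k) k
  simp [hpow, hrow]

theorem fourthMoment_dotProduct_of_isWeighing {d l : ℕ} {A B : Matrix (Fin d) (Fin d) ℝ}
    {c : ℝ} (hc : c ≠ 0) (h : IsWeighing l (c • (A * Bᵀ))) :
    fourthMoment A ⬝ᵥ fourthMoment B = d * l / c ^ 4 := by
  rw [fourthMoment_dotProduct, eq_div_iff (pow_ne_zero 4 hc), ← h.sum_sum_pow_four, sum_mul]
  simp [mul_pow, mul_comm, mul_sum]

theorem quasi_unbiased_bound_15 (f : ℕ)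
    (H : Fin f → Matrix (Fin 40) (Fin 40) ℝ)
    (hHad : ∀ i, _root_.IsHadamard (H i))
    (hQU : ∀ i j, i ≠ j →
      IsWeighing 25 (((1 : ℝ) / 8) • (H i * (H j)ᵀ))) :
    f ≤ 30 := by
  by_contra! hf
  have : Nonempty (Fin f) := ⟨⟨0, by omega⟩⟩
  have key := zero_le_add_card_sub_one_mul_of_inner_le_of_inner_eq
    (fun i => WithLp.toLp 2 (fourthMoment (H i))) (WithLp.toLp 2 pairingTensor)
    (p := 3 * 40 * 40 ^ 2) (q := 3 * 40 ^ 2 + 6 * 40) (D := 40 * 40 ^ 4)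
    (c := 40 * 25 / (1 / 8) ^ 4) (by norm_num) ?_ ?_ ?_ ?_
  · have : (31 : ℝ) ≤ f := by exact_mod_cast hf
    rw [Fintype.card_fin] at key
    linarith
  all_goals simp only [EuclideanSpace.inner_toLp_toLp, star_trivial]
  · simp [pairingTensor_dotProduct_self]
  · intro i
    rw [dotProduct_comm,
      fourthMoment_dotProduct_pairingTensor_of_mul_transpose_eq_smul_one (hHad i).2]
    simp
  · intro i
    rw [fourthMoment_dotProduct_self_of_mul_transpose_eq_smul_one (hHad i).2]
    simp
  · intro i j hij
    rw [fourthMoment_dotProduct_of_isWeighing (by norm_num) (hQU j i (Ne.symm hij))]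
    norm_num
end

section
/- Let X be a finite subset of the unit sphere S^{34} in ℝ^{35} such that for all distinct x, y ∈ X, the inner product ⟨x, y⟩ lies in {1/5, −1/35, −1/7}. Then |X| ≤ 737. In particular, if |X| = 36w for a positive integer w, then w ≤ 20. -/
/-!
Delsarte's linear programming bound. The polynomial
`F t = (5t - 1)(35t + 1)(7t + 1)(1153t + 71)` vanishes at the three inner products, and
`F - 2474928/1295` is a nonnegative combination of the Gegenbauer polynomials of degree 2 and 3
for `S^34` and of `t` times the latter, all positive definite on the sphere (the first two are
Gram kernels of traceless tensor features, the third a Schur product). Summing `F ⟨x, y⟩` over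
`X × X` then gives `(2474928/1295) |X|² ≤ |X| F 1 = 1410048 |X|`, i.e. `|X| ≤ 737`.
-/

open Finset

def IsPosDefOnSphere (d : ℕ) (f : ℝ → ℝ) : Prop :=
  ∀ (X : Finset (Fin d → ℝ)) (c : (Fin d → ℝ) → ℝ), (∀ x ∈ X, dotR x x = 1) →
    0 ≤ ∑ x ∈ X, ∑ y ∈ X, c x * c y * f (dotR x y)

section

variable {d : ℕ}

namespace IsPosDefOnSphere

variable {f g : ℝ → ℝ}

theorem of_feature {ι : Type*} [Fintype ι] (Φ : (Fin d → ℝ) → ι → ℝ)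
    (hΦ : ∀ x y, dotR x x = 1 → dotR y y = 1 → f (dotR x y) = ∑ p, Φ x p * Φ y p) :
    IsPosDefOnSphere d f := by
  intro X c hX
  have h : ∀ x ∈ X, ∀ y ∈ X,
      c x * c y * f (dotR x y) = ∑ p, (c x * Φ x p) * (c y * Φ y p) := by
    intro x hx y hy
    rw [hΦ x y (hX x hx) (hX y hy), mul_sum]
    exact sum_congr rfl fun _ _ => by ring
  rw [sum_congr rfl fun x hx => sum_congr rfl fun y hy => h x hx y hy,
    sum_comm_cycle]
  simp only [← sum_mul_sum, ← sq]
  positivity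

theorem add (hf : IsPosDefOnSphere d f) (hg : IsPosDefOnSphere d g) :
    IsPosDefOnSphere d (fun t => f t + g t) := by
  intro X c hX
  simp only [mul_add, sum_add_distrib]
  exact add_nonneg (hf X c hX) (hg X c hX)

theorem const_mul (hf : IsPosDefOnSphere d f) {a : ℝ} (ha : 0 ≤ a) :
    IsPosDefOnSphere d (fun t => a * f t) := by
  intro X c hX
  have h : ∀ x y, c x * c y * (a * f (dotR x y)) = a * (c x * c y * f (dotR x y)) :=
    fun _ _ => by ring
  simp only [h, ← mul_sum]
  exact mul_nonneg ha (hf X c hX)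

theorem id_mul (hf : IsPosDefOnSphere d f) : IsPosDefOnSphere d (fun t => t * f t) := by
  intro X c hX
  -- Schur product: expanding `⟨x, y⟩` splits the form into `d` forms with weights `c x * x i`.
  have h : ∀ x y, c x * c y * (dotR x y * f (dotR x y))
      = ∑ i, (c x * x i) * (c y * y i) * f (dotR x y) := by
    intro x y
    rw [dotR, sum_mul, mul_sum]
    exact sum_congr rfl fun _ _ => by ring
  simp only [h]
  rw [sum_comm_cycle]
  exact sum_nonneg fun i _ => hf X (fun x => c x * x i) hX

end IsPosDefOnSphere

theorem dotR_comm (x y : Fin d → ℝ) : dotR x y = dotR y x := by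
  simp only [dotR, mul_comm]

def cubeTensor (x : Fin d → ℝ) (p : Fin d × Fin d × Fin d) : ℝ :=
  x p.1 * x p.2.1 * x p.2.2

def deltaTensor (x : Fin d → ℝ) (p : Fin d × Fin d × Fin d) : ℝ :=
  (if p.1 = p.2.1 then x p.2.2 else 0) + (if p.1 = p.2.2 then x p.2.1 else 0)
    + (if p.2.1 = p.2.2 then x p.1 else 0)

-- For unit `x`, these are the traceless parts of `d • x ⊗ x` and `(d + 2) • x ⊗ x ⊗ x`.
def harmonicFeature2 (x : Fin d → ℝ) (p : Fin d × Fin d) : ℝ :=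
  d * (x p.1 * x p.2) - if p.1 = p.2 then 1 else 0

def harmonicFeature3 (x : Fin d → ℝ) (p : Fin d × Fin d × Fin d) : ℝ :=
  (d + 2) * cubeTensor x p - deltaTensor x p

theorem sum_harmonicFeature2_mul {x y : Fin d → ℝ} (hx : dotR x x = 1) (hy : dotR y y = 1) :
    ∑ p, harmonicFeature2 x p * harmonicFeature2 y p = d ^ 2 * dotR x y ^ 2 - d := by
  have hsq : ∑ i, ∑ j, d * (x i * x j) * (d * (y i * y j)) = (d * dotR x y) ^ 2 := by
    rw [sq, dotR, mul_sum, sum_mul_sum]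
    simp only [mul_comm, mul_left_comm, mul_assoc]
  simp only [harmonicFeature2, Fintype.sum_prod_type, sub_mul, mul_sub, sum_sub_distrib,
    mul_ite, ite_mul, mul_one, one_mul, mul_zero, zero_mul, sum_ite_eq, mem_univ,
    if_true, ← mul_sum, hsq, sum_const, card_univ, Fintype.card_fin, nsmul_eq_mul]
  rw [← dotR, ← dotR, hx, hy]
  ring

theorem sum_cubeTensor_mul_cubeTensor (x y : Fin d → ℝ) :
    ∑ p, cubeTensor x p * cubeTensor y p = dotR x y ^ 3 := by
  rw [dotR, pow_three, sum_mul_sum, sum_mul_sum]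
  simp only [cubeTensor, Fintype.sum_prod_type, mul_sum, mul_comm, mul_left_comm]

theorem sum_cubeTensor_mul_deltaTensor (x y : Fin d → ℝ) :
    ∑ p, cubeTensor x p * deltaTensor y p = 3 * (dotR x x * dotR x y) := by
  -- one product per double sum below, in the same order of summation
  rw [show 3 * (dotR x x * dotR x y)
    = dotR x x * dotR x y + dotR x x * dotR x y + dotR x y * dotR x x by ring]
  simp only [cubeTensor, deltaTensor, Fintype.sum_prod_type, mul_add, sum_add_distrib,
    mul_ite, mul_zero, sum_ite_eq, sum_ite_irrel, mem_univ, if_true, sum_const_zero, dotR,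
    sum_mul_sum]
  simp only [mul_comm, mul_left_comm]

theorem sum_deltaTensor_mul_deltaTensor (x y : Fin d → ℝ) :
    ∑ p, deltaTensor x p * deltaTensor y p = 3 * (d + 2) * dotR x y := by
  simp only [deltaTensor, Fintype.sum_prod_type, mul_add, add_mul, sum_add_distrib,
    mul_ite, ite_mul, mul_zero, zero_mul, sum_ite_eq, sum_ite_eq', sum_ite_irrel, mem_univ,
    if_true, sum_const_zero, sum_const, card_univ, Fintype.card_fin, nsmul_eq_mul, dotR, ← mul_sum]
  ring

theorem sum_harmonicFeature3_mul {x y : Fin d → ℝ} (hx : dotR x x = 1) (hy : dotR y y = 1) :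
    ∑ p, harmonicFeature3 x p * harmonicFeature3 y p
      = (d + 2) ^ 2 * dotR x y ^ 3 - 3 * (d + 2) * dotR x y := by
  have h : ∀ p, harmonicFeature3 x p * harmonicFeature3 y p
      = (d + 2) ^ 2 * (cubeTensor x p * cubeTensor y p)
        - (d + 2) * (cubeTensor x p * deltaTensor y p)
        - (d + 2) * (cubeTensor y p * deltaTensor x p) + deltaTensor x p * deltaTensor y p := by
    intro p
    simp only [harmonicFeature3]
    ring
  simp only [h, sum_add_distrib, sum_sub_distrib, ← mul_sum, sum_cubeTensor_mul_cubeTensor,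
    sum_cubeTensor_mul_deltaTensor, sum_deltaTensor_mul_deltaTensor, hx, hy]
  rw [dotR_comm]
  ring

theorem isPosDefOnSphere_gegenbauer2 : IsPosDefOnSphere d (fun t => d ^ 2 * t ^ 2 - d) :=
  .of_feature harmonicFeature2 fun _ _ hx hy => (sum_harmonicFeature2_mul hx hy).symm

theorem isPosDefOnSphere_gegenbauer3 :
    IsPosDefOnSphere d (fun t => (d + 2) ^ 2 * t ^ 3 - 3 * (d + 2) * t) :=
  .of_feature harmonicFeature3 fun _ _ hx hy => (sum_harmonicFeature3_mul hx hy).symm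

theorem card_mul_le_of_isPosDefOnSphere {f : ℝ → ℝ} {c : ℝ}
    (hf : IsPosDefOnSphere d (fun t => f t - c)) {X : Finset (Fin d → ℝ)} (hne : X.Nonempty)
    (hX : ∀ x ∈ X, dotR x x = 1) (hA : ∀ x ∈ X, ∀ y ∈ X, x ≠ y → f (dotR x y) ≤ 0) :
    c * #X ≤ f 1 := by
  have hrow : ∀ x ∈ X, ∑ y ∈ X, f (dotR x y) ≤ f 1 := by
    intro x hx
    have hoff : ∑ y ∈ X.erase x, f (dotR x y) ≤ 0 := sum_nonpos fun y hy =>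
      hA x hx y (mem_of_mem_erase hy) (ne_of_mem_erase hy).symm
    rw [← add_sum_erase X _ hx, hX x hx]
    linarith
  have hgram : c * #X * #X ≤ ∑ x ∈ X, ∑ y ∈ X, f (dotR x y) := by
    have := hf X 1 hX
    simp only [Pi.one_apply, one_mul, sum_sub_distrib, sum_const, nsmul_eq_mul] at this
    linarith
  have hpos : (0 : ℝ) < #X := by exact_mod_cast hne.card_pos
  refine le_of_mul_le_mul_right ?_ hpos
  calc c * #X * #X ≤ ∑ x ∈ X, ∑ y ∈ X, f (dotR x y) := hgram
    _ ≤ ∑ x ∈ X, f 1 := sum_le_sum hrow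
    _ = f 1 * #X := by rw [sum_const, nsmul_eq_mul, mul_comm]

end

theorem three_distance_bound_36 (X : Finset (Fin 35 → ℝ))
    (hX : ∀ x ∈ X, dotR x x = 1)
    (hA : ∀ x ∈ X, ∀ y ∈ X, x ≠ y →
      dotR x y = 1 / 5 ∨ dotR x y = -(1 / 35) ∨ dotR x y = -(1 / 7)) :
    X.card ≤ 737 ∧ ∀ w : ℕ, 0 < w → X.card = 36 * w → w ≤ 20 := by
  set f : ℝ → ℝ := fun t => (5 * t - 1) * (35 * t + 1) * (7 * t + 1) * (1153 * t + 71) with hf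
  have hpos : IsPosDefOnSphere 35 (fun t => f t - 2474928 / 1295) := by
    have h := (((isPosDefOnSphere_gegenbauer2 (d := 35)).const_mul (a := 2566873 / 45325)
      (by norm_num)).add
      (isPosDefOnSphere_gegenbauer3.const_mul (a := 1260 / 37) (by norm_num))).add
      (isPosDefOnSphere_gegenbauer3.id_mul.const_mul (a := 1412425 / 1369) (by norm_num))
    convert h using 2 with t
    push_cast
    ring
  have hvanish : ∀ x ∈ X, ∀ y ∈ X, x ≠ y → f (dotR x y) ≤ 0 := by
    intro x hx y hy hxy
    rcases hA x hx y hy hxy with h | h | h <;> norm_num [hf, h]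
  have hcard : X.card ≤ 737 := by
    rcases X.eq_empty_or_nonempty with rfl | hne
    · simp
    have h := card_mul_le_of_isPosDefOnSphere hpos hne hX hvanish
    norm_num [hf] at h
    have : (X.card : ℝ) < 738 := by linarith
    exact Nat.lt_succ_iff.mp (by exact_mod_cast this)
  exact ⟨hcard, fun w _ hw => by omega⟩
end

section
/- Let d, k₁, k₂, λ be positive integers and let X₁, X₂ ⊆ ℤ/dℤ with |X₁| = k₁ and |X₂| = k₂ form a 2-{d; k₁, k₂; λ} supplementary difference set, i.e., for every nonzero i ∈ ℤ/dℤ, |{(x, y) ∈ X₁ × X₁ : y − x = i}| + |{(x, y) ∈ X₂ × X₂ : y − x = i}| = λ. For j = 1, 2, let R_j be the d×d circulant matrix over ℝ with (R_j)_{s,t} = −1 if t − s ∈ X_j and (R_j)_{s,t} = 1 otherwise. Then R₁R₁ᵀ + R₂R₂ᵀ = 4(k₁+k₂−λ)·I + 2(d − 2(k₁+k₂−λ))·J, where I is the identity matrix and J is the all-ones matrix of order d. -/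
open Finset Matrix

/-!
Entry `(s, t)` of `R Rᵀ` is `∑ u, σ(u - s) σ(u - t)` with `σ = 1 - 2 • 𝟙_X`. Expanding the product,
each translate of `X` is counted once and the pairs with `u - s, u - t ∈ X` are exactly the pairs
of `X × X` with difference `t - s`, so the entry is `d - 4|X| + 4 P_X(t - s)`. Adding the two
matrices, `P_{X₁} + P_{X₂}` is `k₁ + k₂` on the diagonal and `λ` off it.
-/

section
variable {G : Type*} [AddCommGroup G] [DecidableEq G]

lemma card_filter_sub_eq_zero (X : Finset G) : #{p ∈ X ×ˢ X | p.2 - p.1 = 0} = #X := by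
  rw [← X.diag_card]
  congr 1
  ext p
  simp only [mem_filter, mem_product, mem_diag, sub_eq_zero, eq_comm]
  grind

variable [Fintype G]

lemma card_filter_sub_mem_and_sub_mem (X : Finset G) (s t : G) :
    #{u | u - t ∈ X ∧ u - s ∈ X} = #{p ∈ X ×ˢ X | p.2 - p.1 = t - s} := by
  have shift {p : G × G} (hp : p.2 - p.1 = t - s) : p.1 + t - s = p.2 := by
    rw [add_sub_assoc, ← hp]; abel
  refine card_nbij' (fun u => (u - t, u - s)) (fun p => p.1 + t) ?_ ?_ ?_ ?_
  · intro u hu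
    simp_all
  · intro p hp
    simp only [coe_filter, mem_product] at hp
    simp [shift hp.2, hp.1.1, hp.1.2]
  · intro u _
    simp
  · intro p hp
    simp only [coe_filter, mem_product] at hp
    ext <;> simp [shift hp.2]

lemma card_filter_sub_mem (X : Finset G) (a : G) : #{u | u - a ∈ X} = #X := by
  have h := card_filter_sub_mem_and_sub_mem X a a
  simp only [and_self, sub_self] at h
  rw [h, card_filter_sub_eq_zero]

lemma sum_sign_sub_mul_sign_sub {R : Type*} [CommRing R] (X : Finset G) (s t : G) :
    ∑ u, (if u - s ∈ X then (-1 : R) else 1) * (if u - t ∈ X then -1 else 1) =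
      Fintype.card G - 4 * #X + 4 * #{p ∈ X ×ˢ X | p.2 - p.1 = t - s} := by
  have expand (u : G) :
      (if u - s ∈ X then (-1 : R) else 1) * (if u - t ∈ X then -1 else 1) =
        1 - 2 * (if u - s ∈ X then 1 else 0) - 2 * (if u - t ∈ X then 1 else 0) +
          4 * (if u - t ∈ X ∧ u - s ∈ X then 1 else 0) := by
    by_cases hs : u - s ∈ X <;> by_cases ht : u - t ∈ X <;> simp [hs, ht] <;> ring
  simp only [expand, sum_add_distrib, sum_sub_distrib, ← mul_sum, sum_boole,
    card_filter_sub_mem, card_filter_sub_mem_and_sub_mem, sum_const, card_univ, nsmul_one]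
  ring
end

theorem supplementary_difference_set_matrix_eq_general (d k₁ k₂ lam : ℕ) [NeZero d]
    (X₁ X₂ : Finset (ZMod d)) (hcard₁ : X₁.card = k₁) (hcard₂ : X₂.card = k₂)
    (hSDS : ∀ i : ZMod d, i ≠ 0 →
      ((X₁ ×ˢ X₁).filter (fun p => p.2 - p.1 = i)).card +
        ((X₂ ×ˢ X₂).filter (fun p => p.2 - p.1 = i)).card = lam)
    (R₁ R₂ : Matrix (ZMod d) (ZMod d) ℝ)
    (hR₁ : ∀ s t, R₁ s t = if t - s ∈ X₁ then -1 else 1)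
    (hR₂ : ∀ s t, R₂ s t = if t - s ∈ X₂ then -1 else 1) :
    R₁ * R₁ᵀ + R₂ * R₂ᵀ =
      (4 * ((k₁ : ℝ) + (k₂ : ℝ) - (lam : ℝ))) • (1 : Matrix (ZMod d) (ZMod d) ℝ) +
        (2 * ((d : ℝ) - 2 * ((k₁ : ℝ) + (k₂ : ℝ) - (lam : ℝ)))) •
          Matrix.of (fun _ _ => (1 : ℝ)) := by
  ext s t
  simp only [Matrix.add_apply, mul_apply, transpose_apply, Matrix.smul_apply, one_apply, of_apply,
    smul_eq_mul, hR₁, hR₂, sum_sign_sub_mul_sign_sub, ZMod.card, hcard₁, hcard₂]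
  rcases eq_or_ne s t with rfl | hst
  · simp only [sub_self, card_filter_sub_eq_zero, hcard₁, hcard₂, if_true]
    ring
  · have hlam : (#{p ∈ X₁ ×ˢ X₁ | p.2 - p.1 = t - s} : ℝ) +
        #{p ∈ X₂ ×ˢ X₂ | p.2 - p.1 = t - s} = lam := by
      exact_mod_cast hSDS (t - s) (sub_ne_zero.mpr hst.symm)
    rw [if_neg hst]
    linear_combination 4 * hlam

theorem supplementary_difference_set_matrix_eq (d k₁ k₂ lam : ℕ) [NeZero d]
    (hk₁ : 0 < k₁) (hk₂ : 0 < k₂) (hlam : 0 < lam)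
    (X₁ X₂ : Finset (ZMod d)) (hcard₁ : X₁.card = k₁) (hcard₂ : X₂.card = k₂)
    (hSDS : ∀ i : ZMod d, i ≠ 0 →
      ((X₁ ×ˢ X₁).filter (fun p => p.2 - p.1 = i)).card +
        ((X₂ ×ˢ X₂).filter (fun p => p.2 - p.1 = i)).card = lam)
    (R₁ R₂ : Matrix (ZMod d) (ZMod d) ℝ)
    (hR₁ : ∀ s t, R₁ s t = if t - s ∈ X₁ then -1 else 1)
    (hR₂ : ∀ s t, R₂ s t = if t - s ∈ X₂ then -1 else 1) :
    R₁ * R₁ᵀ + R₂ * R₂ᵀ =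
      (4 * ((k₁ : ℝ) + (k₂ : ℝ) - (lam : ℝ))) • (1 : Matrix (ZMod d) (ZMod d) ℝ) +
        (2 * ((d : ℝ) - 2 * ((k₁ : ℝ) + (k₂ : ℝ) - (lam : ℝ)))) •
          Matrix.of (fun _ _ => (1 : ℝ)) :=
  supplementary_difference_set_matrix_eq_general d k₁ k₂ lam X₁ X₂ hcard₁ hcard₂ hSDS R₁ R₂ hR₁ hR₂
end
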